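/- arXiv:2502.19972 — 8 statements merged into one kernel-verified Lean document; each statement's English description precedes it below -/
import Mathlib

section
/- Let g ≥ 1 be an integer and λ̃_0, λ̃_2, …, λ̃_{4g+2} complex numbers, M̃(X) = Σ_{i=0}^{2g+1} λ̃_{2i} X^{2g+1−i}, and f̃(ẽ_1,ẽ_2) = Σ_{i=0}^{g} ẽ_1^i ẽ_2^i (2λ̃_{4g+2−4i} + λ̃_{4g−4i}(ẽ_1+ẽ_2)). Then for all ẽ_1 ∈ ℂ one has f̃(ẽ_1,ẽ_1) = 2M̃(ẽ_1) and (∂f̃/∂ẽ_2)(ẽ_1,ẽ_2)|_{ẽ_2=ẽ_1} = M̃'(ẽ_1), where M̃' is the derivative of the polynomial M̃. -/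
lemma pair_sum (F : ℕ → ℂ) (n : ℕ) :
    ∑ i ∈ Finset.range (2*n), F i = ∑ j ∈ Finset.range n, (F (2*j) + F (2*j+1)) := by
  induction n with
  | zero => simp
  | succ k ih =>
    rw [show 2*(k+1) = 2*k+1+1 by ring, Finset.sum_range_succ, Finset.sum_range_succ,
      Finset.sum_range_succ, ih]
    ring

/-- Baker's lemma on the polynomial `f̃(ẽ₁,ẽ₂)` associated with the
curve `Y² = M̃(X)`: `f̃(ẽ₁,ẽ₁) = 2M̃(ẽ₁)` and `(∂f̃/∂ẽ₂)|_{ẽ₂=ẽ₁} = M̃'(ẽ₁)`. -/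
theorem stmt_1 (g : ℕ) (hg : 1 ≤ g) (lam : ℕ → ℂ)
    (M : ℂ → ℂ)
    (hM : M = fun X => ∑ i ∈ Finset.range (2*g+2), lam (2*i) * X^(2*g+1-i))
    (ftil : ℂ → ℂ → ℂ)
    (hftil : ftil = fun e1 e2 => ∑ i ∈ Finset.range (g+1),
      e1^i * e2^i * (2 * lam (4*g+2-4*i) + lam (4*g-4*i) * (e1+e2))) :
    ∀ e1 : ℂ, ftil e1 e1 = 2 * M e1 ∧ deriv (fun e2 => ftil e1 e2) e1 = deriv M e1 := by
  subst hM hftil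
  intro e1
  have hMd : HasDerivAt (fun X : ℂ => ∑ i ∈ Finset.range (2*g+2), lam (2*i) * X^(2*g+1-i))
      (∑ i ∈ Finset.range (2*g+2), lam (2*i) * ((2*g+1-i : ℕ) * e1^(2*g+1-i-1))) e1 :=
    HasDerivAt.fun_sum fun i _ => (hasDerivAt_pow (2*g+1-i) e1).const_mul _
  have hfd : HasDerivAt (fun e2 : ℂ => ∑ i ∈ Finset.range (g+1),
      e1^i * e2^i * (2 * lam (4*g+2-4*i) + lam (4*g-4*i) * (e1+e2)))
      (∑ i ∈ Finset.range (g+1),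
        (e1^i * ((i:ℂ) * e1^(i-1)) * (2 * lam (4*g+2-4*i) + lam (4*g-4*i) * (e1+e1))
          + e1^i * e1^i * (lam (4*g-4*i) * 1))) e1 := by
    refine HasDerivAt.fun_sum fun i _ => ?_
    exact ((hasDerivAt_pow i e1).const_mul (e1^i)).mul
      ((((hasDerivAt_id e1).const_add e1).const_mul (lam (4*g-4*i))).const_add
        (2 * lam (4*g+2-4*i)))
  constructor
  · show (∑ i ∈ Finset.range (g+1),
        e1^i * e1^i * (2 * lam (4*g+2-4*i) + lam (4*g-4*i) * (e1+e1)))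
      = 2 * ∑ i ∈ Finset.range (2*g+2), lam (2*i) * e1^(2*g+1-i)
    rw [Finset.mul_sum, show 2*g+2 = 2*(g+1) by ring,
      pair_sum (fun i => 2 * (lam (2*i) * e1^(2*g+1-i))) (g+1),
      ← Finset.sum_range_reflect]
    refine Finset.sum_congr rfl fun j hj => ?_
    have hj' := Finset.mem_range.mp hj
    simp only [Nat.add_sub_cancel]
    rw [show 4*g+2-4*(g-j) = 2*(2*j+1) by omega, show 4*g-4*(g-j) = 2*(2*j) by omega,
      show 2*g+1-2*j = 2*(g-j)+1 by omega, show 2*g+1-(2*j+1) = 2*(g-j) by omega]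
    ring
  · rw [hfd.deriv, hMd.deriv]
    rw [show 2*g+2 = 2*(g+1) by ring,
      pair_sum (fun i => lam (2*i) * ((2*g+1-i : ℕ) * e1^(2*g+1-i-1))) (g+1),
      ← Finset.sum_range_reflect]
    refine Finset.sum_congr rfl fun j hj => ?_
    have hj' := Finset.mem_range.mp hj
    simp only [Nat.add_sub_cancel]
    rw [show 4*g+2-4*(g-j) = 2*(2*j+1) by omega, show 4*g-4*(g-j) = 2*(2*j) by omega,
      show 2*g+1-2*j-1 = 2*(g-j) by omega, show 2*g+1-2*j = 2*(g-j)+1 by omega,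
      show 2*g+1-(2*j+1)-1 = 2*(g-j)-1 by omega, show 2*g+1-(2*j+1) = 2*(g-j) by omega]
    set k := g - j with hk
    clear_value k
    cases k with
    | zero => norm_num
    | succ m =>
      rw [show m+1-1 = m from rfl, show 2*(m+1)-1 = 2*m+1 by omega]
      push_cast
      ring
end

section
/- The two-variable polynomial F(e_1,e_2) is divisible by R(e_1)·R(e_2) in ℂ[e_1,e_2]. -/
open MvPolynomial

/-- The polynomial `N(x) = Σ_{i=0}^{2g+2} ν_{2i} x^{2g+2-i}` as a function. -/
noncomputable def Nfun (g : ℕ) (ν : ℤ → ℂ) (x : ℂ) : ℂ :=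
  ∑ i ∈ Finset.range (2*g+3), ν (2*(i:ℤ)) * x^(2*g+2-i)

/-- `R(x) = (x-a)(x-x₁)⋯(x-x_g)` as a function. -/
noncomputable def Rfun (g : ℕ) (a : ℂ) (x : Fin g → ℂ) (e : ℂ) : ℂ :=
  (e - a) * ∏ i, (e - x i)

/-- `N(e_v)` as a polynomial in `ℂ[e₁,e₂]` (variable `v`). -/
noncomputable def Npoly (g : ℕ) (ν : ℤ → ℂ) (v : Fin 2) : MvPolynomial (Fin 2) ℂ :=
  ∑ i ∈ Finset.range (2*g+3), C (ν (2*(i:ℤ))) * (X v)^(2*g+2-i)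

/-- `f(e₁,e₂) = Σ_{i=0}^{g+1} e₁^i e₂^i (2ν_{4g+4-4i} + ν_{4g+2-4i}(e₁+e₂))` in `ℂ[e₁,e₂]`. -/
noncomputable def fpoly (g : ℕ) (ν : ℤ → ℂ) : MvPolynomial (Fin 2) ℂ :=
  ∑ i ∈ Finset.range (g+2), (X 0)^i * (X 1)^i *
    (C (2 * ν (4*(g:ℤ)+4-4*(i:ℤ))) + C (ν (4*(g:ℤ)+2-4*(i:ℤ))) * (X 0 + X 1))

/-- `R(e_v)` as a polynomial in `ℂ[e₁,e₂]` (variable `v`). -/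
noncomputable def Rpoly (g : ℕ) (a : ℂ) (x : Fin g → ℂ) (v : Fin 2) : MvPolynomial (Fin 2) ℂ :=
  (X v - C a) * ∏ i, (X v - C (x i))

/-- `R(e₁)R(e₂)∇(e₁,e₂)` as a polynomial in `ℂ[e₁,e₂]`, where
`∇(e₁,e₂) = Σᵢ yᵢ/((e₁-xᵢ)(e₂-xᵢ)R'(xᵢ))`. -/
noncomputable def Spoly (g : ℕ) (a : ℂ) (x y : Fin g → ℂ) : MvPolynomial (Fin 2) ℂ :=
  ∑ i : Fin g, C (y i / deriv (Rfun g a x) (x i)) *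
    ((X 0 - C a) * ∏ j ∈ Finset.univ.erase i, (X 0 - C (x j))) *
    ((X 1 - C a) * ∏ j ∈ Finset.univ.erase i, (X 1 - C (x j)))

/-- `F(e₁,e₂) = f(e₁,e₂)R(e₁)R(e₂) + (e₁-e₂)²R(e₁)²R(e₂)²∇(e₁,e₂)² - N(e₁)R(e₂)² - N(e₂)R(e₁)²`
as a polynomial in `ℂ[e₁,e₂]`. -/
noncomputable def Fpoly (g : ℕ) (ν : ℤ → ℂ) (a : ℂ) (x y : Fin g → ℂ) :
    MvPolynomial (Fin 2) ℂ :=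
  fpoly g ν * Rpoly g a x 0 * Rpoly g a x 1
    + (X 0 - X 1)^2 * (Spoly g a x y)^2
    - Npoly g ν 0 * (Rpoly g a x 1)^2 - Npoly g ν 1 * (Rpoly g a x 0)^2

/-!
`F` vanishes on the line `e₁ = a`, because `R(a) = N(a) = 0`, and on each line `e₁ = xₖ`: there
only the `k`-th term of `∇` survives, `R'(xₖ)` cancels, and the two remaining terms
`yₖ²(e₂ - xₖ)²Qₖ(e₂)²` and `N(xₖ)R(e₂)²`, with `R(e) = (e - xₖ)Qₖ(e)`, agree since `yₖ² = N(xₖ)`.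
As `a, x₁, …, x_g` are distinct, `R(e₁)` divides `F`, and by the symmetry of `F` so does `R(e₂)`.
Since `R(e₂)` does not vanish on these lines, the quotient `F / R(e₂)` still vanishes
there, so it is divisible by `R(e₁)`.
-/

section Specialization

variable {R : Type*} [CommRing R] {n : ℕ}

noncomputable def evalFirst (c : R) : MvPolynomial (Fin (n + 1)) R →ₐ[R] MvPolynomial (Fin n) R :=
  aeval (Fin.cons (C c) X)

@[simp]
lemma evalFirst_X_zero (c : R) : evalFirst c (X 0 : MvPolynomial (Fin (n + 1)) R) = C c := by
  simp [evalFirst]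

@[simp]
lemma evalFirst_X_succ (c : R) (i : Fin n) :
    evalFirst c (X i.succ : MvPolynomial (Fin (n + 1)) R) = X i := by
  simp [evalFirst]

@[simp]
lemma evalFirst_X_one (c : R) : evalFirst c (X 1 : MvPolynomial (Fin 2) R) = X 0 :=
  evalFirst_X_succ c 0

@[simp]
lemma evalFirst_C (c r : R) : evalFirst c (C r : MvPolynomial (Fin (n + 1)) R) = C r :=
  (evalFirst c).commutes r

lemma eval_C_finSuccEquiv (c : R) (p : MvPolynomial (Fin (n + 1)) R) :
    (finSuccEquiv R n p).eval (C c) = evalFirst c p := by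
  have : (Polynomial.evalRingHom (C c)).comp (finSuccEquiv R n).toRingHom =
      (evalFirst c).toRingHom := by
    refine ringHom_ext (fun r => by simp [finSuccEquiv_apply]) fun i => ?_
    cases i using Fin.cases <;> simp [finSuccEquiv_X_zero, finSuccEquiv_X_succ]
  exact RingHom.congr_fun this p

lemma X_zero_sub_C_dvd_iff (c : R) (p : MvPolynomial (Fin (n + 1)) R) :
    X 0 - C c ∣ p ↔ evalFirst c p = 0 := by
  rw [← eval_C_finSuccEquiv, ← map_dvd_iff (finSuccEquiv R n), map_sub, finSuccEquiv_X_zero,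
    ← algebraMap_eq, AlgEquiv.commutes, Polynomial.algebraMap_apply, algebraMap_eq,
    Polynomial.dvd_iff_isRoot, Polynomial.IsRoot.def]

lemma X_sub_C_ne_zero [Nontrivial R] {σ : Type*} (i : σ) (c : R) :
    (X i - C c : MvPolynomial σ R) ≠ 0 :=
  fun h => by simpa using congrArg (eval fun _ => c + 1) h

noncomputable def swapVars : MvPolynomial (Fin 2) R →ₐ[R] MvPolynomial (Fin 2) R :=
  rename (Equiv.swap 0 1)

@[simp]
lemma swapVars_X_zero : swapVars (X 0 : MvPolynomial (Fin 2) R) = X 1 := by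
  simp [swapVars]

@[simp]
lemma swapVars_X_one : swapVars (X 1 : MvPolynomial (Fin 2) R) = X 0 := by
  simp [swapVars]

@[simp]
lemma swapVars_C (r : R) : swapVars (C r : MvPolynomial (Fin 2) R) = C r :=
  swapVars.commutes r

end Specialization

section Field

variable {K : Type*} [Field K] {ι : Type*}

lemma pairwise_isCoprime_X_sub_C {σ : Type*} (i : σ) {r : ι → K} (hr : Function.Injective r) :
    Pairwise fun j k => IsCoprime (X i - C (r j) : MvPolynomial σ K) (X i - C (r k)) :=
  (Polynomial.pairwise_coprime_X_sub_C hr).mono fun j k h => by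
    have := h.map (Polynomial.aeval (R := K) (X i : MvPolynomial σ K)).toRingHom
    simp only [AlgHom.toRingHom_eq_coe, RingHom.coe_coe, map_sub, Polynomial.aeval_X,
      Polynomial.aeval_C, algebraMap_eq] at this
    exact this

lemma prod_X_zero_sub_C_dvd [Fintype ι] {n : ℕ} {r : ι → K} (hr : Function.Injective r)
    {p : MvPolynomial (Fin (n + 1)) K} (hp : ∀ j, evalFirst (r j) p = 0) :
    ∏ j, (X 0 - C (r j)) ∣ p :=
  Finset.prod_dvd_of_coprime ((pairwise_isCoprime_X_sub_C 0 hr).set_pairwise _) fun j _ =>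
    (X_zero_sub_C_dvd_iff _ _).2 (hp j)

lemma prod_mul_prod_dvd_of_swapVars_eq [Fintype ι] {r : ι → K} (hr : Function.Injective r)
    {p : MvPolynomial (Fin 2) K} (hp : ∀ j, evalFirst (r j) p = 0) (hsymm : swapVars p = p) :
    (∏ j, (X 0 - C (r j))) * ∏ j, (X 1 - C (r j)) ∣ p := by
  obtain ⟨q, rfl⟩ : ∏ j, (X 1 - C (r j)) ∣ p := by
    simpa [map_prod, hsymm] using map_dvd swapVars (prod_X_zero_sub_C_dvd hr hp)
  rw [mul_comm _ q]
  refine mul_dvd_mul_right (prod_X_zero_sub_C_dvd hr fun j => ?_) _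
  have hne : evalFirst (r j) (∏ k, (X 1 - C (r k)) : MvPolynomial (Fin 2) K) ≠ 0 := by
    simpa [map_prod, Finset.prod_ne_zero_iff] using fun k => X_sub_C_ne_zero 0 (r k)
  exact (mul_eq_zero.1 (map_mul (evalFirst (r j)) _ q ▸ hp j)).resolve_left hne

end Field

section Curve

variable {g : ℕ} {ν : ℤ → ℂ} {a : ℂ} {x y : Fin g → ℂ}

def Rroots (a : ℂ) (x : Fin g → ℂ) : Option (Fin g) → ℂ := fun o => o.elim a x

lemma Rroots_injective (hx : Function.Injective x) (hxa : ∀ i, x i ≠ a) :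
    Function.Injective (Rroots a x) := by
  rintro (_ | i) (_ | j) h
  exacts [rfl, (hxa j h.symm).elim, (hxa i h).elim, congrArg some (hx h)]

lemma Rpoly_eq_prod (v : Fin 2) : Rpoly g a x v = ∏ o, (X v - C (Rroots a x o)) := by
  simp [Rpoly, Rroots, Fintype.prod_option]

lemma deriv_Rfun (k : Fin g) :
    deriv (Rfun g a x) (x k) = (x k - a) * ∏ j ∈ Finset.univ.erase k, (x k - x j) := by
  set q : Polynomial ℂ := (Polynomial.X - Polynomial.C a) *
    ∏ j ∈ Finset.univ.erase k, (Polynomial.X - Polynomial.C (x j))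
  have hR : Rfun g a x = fun e => ((Polynomial.X - Polynomial.C (x k)) * q).eval e := by
    funext e
    simp only [Rfun, q, Polynomial.eval_mul, Polynomial.eval_sub, Polynomial.eval_X,
      Polynomial.eval_C, Polynomial.eval_prod, ← Finset.mul_prod_erase _ _ (Finset.mem_univ k)]
    ring
  rw [hR, Polynomial.deriv]
  simp [Polynomial.derivative_mul, q, Polynomial.eval_prod]

lemma evalFirst_Npoly_zero (c : ℂ) : evalFirst c (Npoly g ν 0) = C (Nfun g ν c) := by
  simp [Npoly, Nfun, map_sum]

lemma evalFirst_Rpoly_zero (c : ℂ) : evalFirst c (Rpoly g a x 0) = C (Rfun g a x c) := by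
  simp [Rpoly, Rfun, map_prod]

lemma evalFirst_Rpoly_one (c : ℂ) :
    evalFirst c (Rpoly g a x 1) = (X 0 - C a) * ∏ i, (X 0 - C (x i)) := by
  simp [Rpoly, map_prod]

lemma evalFirst_Spoly (c : ℂ) :
    evalFirst c (Spoly g a x y) = ∑ i : Fin g,
      C (y i / deriv (Rfun g a x) (x i) * ((c - a) * ∏ j ∈ Finset.univ.erase i, (c - x j))) *
        ((X 0 - C a) * ∏ j ∈ Finset.univ.erase i, (X 0 - C (x j))) := by
  simp [Spoly, map_prod, map_sum, mul_assoc]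

lemma evalFirst_Fpoly_of_root_a (ha : Nfun g ν a = 0) : evalFirst a (Fpoly g ν a x y) = 0 := by
  have hR : evalFirst a (Rpoly g a x 0) = 0 := by simp [evalFirst_Rpoly_zero, Rfun]
  have hS : evalFirst a (Spoly g a x y) = 0 := by simp [evalFirst_Spoly]
  simp [Fpoly, hR, hS, evalFirst_Npoly_zero, ha]

lemma evalFirst_Spoly_of_root_x (hx : Function.Injective x) (hxa : ∀ i, x i ≠ a) (k : Fin g) :
    evalFirst (x k) (Spoly g a x y) =
      C (y k) * ((X 0 - C a) * ∏ j ∈ Finset.univ.erase k, (X 0 - C (x j))) := by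
  have hR' : deriv (Rfun g a x) (x k) ≠ 0 := by
    rw [deriv_Rfun]
    refine mul_ne_zero (sub_ne_zero.2 (hxa k)) (Finset.prod_ne_zero_iff.2 fun j hj => ?_)
    exact sub_ne_zero.2 fun h => (Finset.ne_of_mem_erase hj) (hx h).symm
  rw [evalFirst_Spoly, Finset.sum_eq_single k]
  · rw [← deriv_Rfun, div_mul_cancel₀ _ hR']
  · intro i _ hik
    rw [Finset.prod_eq_zero (Finset.mem_erase.2 ⟨Ne.symm hik, Finset.mem_univ k⟩) (sub_self _)]
    simp
  · simp

lemma evalFirst_Fpoly_of_root_x (hxy : ∀ i, y i ^ 2 = Nfun g ν (x i))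
    (hx : Function.Injective x) (hxa : ∀ i, x i ≠ a) (k : Fin g) :
    evalFirst (x k) (Fpoly g ν a x y) = 0 := by
  have hR : evalFirst (x k) (Rpoly g a x 0) = 0 := by
    simp [evalFirst_Rpoly_zero, Rfun, Finset.prod_eq_zero (Finset.mem_univ k)]
  simp only [Fpoly, map_sub, map_add, map_mul, map_pow, hR, evalFirst_Spoly_of_root_x hx hxa,
    evalFirst_Npoly_zero, ← hxy, evalFirst_Rpoly_one, evalFirst_X_zero, evalFirst_X_one,
    ← Finset.mul_prod_erase _ _ (Finset.mem_univ k)]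
  ring

lemma evalFirst_Fpoly_Rroots (ha : Nfun g ν a = 0) (hxy : ∀ i, y i ^ 2 = Nfun g ν (x i))
    (hx : Function.Injective x) (hxa : ∀ i, x i ≠ a) (o : Option (Fin g)) :
    evalFirst (Rroots a x o) (Fpoly g ν a x y) = 0 := by
  cases o with
  | none => exact evalFirst_Fpoly_of_root_a ha
  | some k => exact evalFirst_Fpoly_of_root_x hxy hx hxa k

lemma swapVars_Npoly (v : Fin 2) : swapVars (Npoly g ν v) = Npoly g ν (Equiv.swap 0 1 v) := by
  simp [Npoly, swapVars, map_sum]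

lemma swapVars_Rpoly (v : Fin 2) :
    swapVars (Rpoly g a x v) = Rpoly g a x (Equiv.swap 0 1 v) := by
  simp [Rpoly, swapVars, map_prod]

lemma swapVars_fpoly : swapVars (fpoly g ν) = fpoly g ν := by
  simp only [fpoly, map_sum, map_mul, map_add, map_pow, swapVars_X_zero, swapVars_X_one,
    swapVars_C]
  exact Finset.sum_congr rfl fun i _ => by ring

lemma swapVars_Spoly : swapVars (Spoly g a x y) = Spoly g a x y := by
  simp only [Spoly, map_sum, map_mul, map_sub, map_prod, swapVars_X_zero, swapVars_X_one,
    swapVars_C]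
  exact Finset.sum_congr rfl fun i _ => by ring

lemma swapVars_Fpoly : swapVars (Fpoly g ν a x y) = Fpoly g ν a x y := by
  simp only [Fpoly, map_sub, map_add, map_mul, map_pow, swapVars_X_zero, swapVars_X_one,
    swapVars_fpoly, swapVars_Spoly, swapVars_Npoly, swapVars_Rpoly, Equiv.swap_apply_left,
    Equiv.swap_apply_right]
  ring

end Curve

theorem stmt_3_general (g : ℕ) (ν : ℤ → ℂ)
    (a : ℂ) (ha : Nfun g ν a = 0)
    (x y : Fin g → ℂ) (hxy : ∀ i, (y i)^2 = Nfun g ν (x i))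
    (hx : Function.Injective x) (hxa : ∀ i, x i ≠ a) :
    (Rpoly g a x 0 * Rpoly g a x 1) ∣ Fpoly g ν a x y := by
  rw [Rpoly_eq_prod, Rpoly_eq_prod]
  exact prod_mul_prod_dvd_of_swapVars_eq (Rroots_injective hx hxa)
    (evalFirst_Fpoly_Rroots ha hxy hx hxa) swapVars_Fpoly

/-- `F(e₁,e₂)` is divisible by `R(e₁)·R(e₂)` in `ℂ[e₁,e₂]`. -/
theorem stmt_3 (g : ℕ) (hg : 1 ≤ g) (ν : ℤ → ℂ) (hν0 : ν 0 ≠ 0) (hνm2 : ν (-2) = 0)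
    (a : ℂ) (ha : Nfun g ν a = 0)
    (x y : Fin g → ℂ) (hxy : ∀ i, (y i)^2 = Nfun g ν (x i))
    (hx : Function.Injective x) (hxa : ∀ i, x i ≠ a) :
    (Rpoly g a x 0 * Rpoly g a x 1) ∣ Fpoly g ν a x y :=
  stmt_3_general g ν a ha x y hxy hx hxa
end

section
/- For all e_1 ∈ ℂ one has F(e_1,e_1) = 0 and (∂F/∂e_2)(e_1,e_2)|_{e_2=e_1} = 0; consequently the polynomial F(e_1,e_2) is divisible by (e_1−e_2)² in ℂ[e_1,e_2]. -/
open MvPolynomial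

/- ### Auxiliary lemmas -/

private lemma sum_range_odd_split {M : Type*} [AddCommMonoid M] (n : ℕ) (c : ℕ → M) :
    ∑ j ∈ Finset.range (2*n+1), c j
      = ∑ i ∈ Finset.range (n+1), c (2*i) + ∑ i ∈ Finset.range n, c (2*i+1) := by
  induction n with
  | zero => simp
  | succ n ih =>
    have e1 : 2*(n+1)+1 = (2*n+1)+1+1 := by ring
    rw [e1, Finset.sum_range_succ, Finset.sum_range_succ, ih,
        Finset.sum_range_succ (fun i => c (2*i)) (n+1),
        Finset.sum_range_succ (fun i => c (2*i+1)) n]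
    have e2 : 2*n+1+1 = 2*(n+1) := by ring
    rw [e2]
    abel

private lemma eval_aeval_comp (x : Fin 1 → ℂ) (P : MvPolynomial (Fin 2) ℂ) :
    eval x (aeval (fun _ => (X 0 : MvPolynomial (Fin 1) ℂ)) P) = eval (fun _ => x 0) P := by
  induction P using MvPolynomial.induction_on with
  | C c => simp
  | add p q hp hq => simp only [map_add, hp, hq]
  | mul_X p i hp => simp only [map_mul, aeval_X, eval_X, hp]

private lemma eval_finSuccEquiv (P : MvPolynomial (Fin 2) ℂ) :
    Polynomial.eval (X 0 : MvPolynomial (Fin 1) ℂ) (MvPolynomial.finSuccEquiv ℂ 1 P)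
      = aeval (fun _ => (X 0 : MvPolynomial (Fin 1) ℂ)) P := by
  induction P using MvPolynomial.induction_on with
  | C c => simp [finSuccEquiv_apply]
  | add p q hp hq => simp only [map_add, Polynomial.eval_add, hp, hq]
  | mul_X p i hp =>
    simp only [map_mul, Polynomial.eval_mul, hp, aeval_X]
    refine congrArg (_ * ·) ?_
    refine Fin.cases ?_ ?_ i
    · rw [finSuccEquiv_X_zero]; simp
    · intro j
      rw [finSuccEquiv_X_succ, Polynomial.eval_C, Subsingleton.elim j 0]

private lemma dvd_of_diag (P : MvPolynomial (Fin 2) ℂ)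
    (h : aeval (fun _ => (X 0 : MvPolynomial (Fin 1) ℂ)) P = 0) :
    (X 0 - X 1 : MvPolynomial (Fin 2) ℂ) ∣ P := by
  have hroot : Polynomial.IsRoot (MvPolynomial.finSuccEquiv ℂ 1 P) (X 0) := by
    rw [Polynomial.IsRoot, eval_finSuccEquiv, h]
  obtain ⟨q, hq⟩ := Polynomial.dvd_iff_isRoot.mpr hroot
  refine ⟨(MvPolynomial.finSuccEquiv ℂ 1).symm q, ?_⟩
  apply (MvPolynomial.finSuccEquiv ℂ 1).injective
  rw [map_mul, map_sub, finSuccEquiv_X_zero,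
    show (1 : Fin 2) = Fin.succ 0 from rfl, finSuccEquiv_X_succ,
    AlgEquiv.apply_symm_apply, ← hq]

private lemma diag_rename (P : MvPolynomial (Fin 2) ℂ) :
    aeval (fun _ => (X 0 : MvPolynomial (Fin 1) ℂ)) (rename (Equiv.swap 0 1) P)
      = aeval (fun _ => (X 0 : MvPolynomial (Fin 1) ℂ)) P := by
  rw [aeval_rename]; rfl

private lemma sq_dvd_of_diag_symm (P : MvPolynomial (Fin 2) ℂ)
    (hsym : rename (Equiv.swap 0 1) P = P)
    (h : aeval (fun _ => (X 0 : MvPolynomial (Fin 1) ℂ)) P = 0) :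
    ((X 0 - X 1 : MvPolynomial (Fin 2) ℂ))^2 ∣ P := by
  obtain ⟨K, hK⟩ := dvd_of_diag P h
  have hXne : (X 0 - X 1 : MvPolynomial (Fin 2) ℂ) ≠ 0 := by
    intro hc
    have h0 := congrArg (eval ![(1:ℂ), 0]) hc
    simp at h0
  have hKanti : rename (Equiv.swap 0 1) K = -K := by
    have h2 := congrArg (rename (Equiv.swap (0:Fin 2) 1)) hK
    rw [hsym, map_mul, map_sub, rename_X, rename_X, Equiv.swap_apply_left,
      Equiv.swap_apply_right, hK] at h2
    have h1 : (X 0 - X 1 : MvPolynomial (Fin 2) ℂ) * rename (Equiv.swap 0 1) K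
        = (X 0 - X 1) * (-K) := by linear_combination h2
    exact mul_left_cancel₀ hXne h1
  have hKdiag : aeval (fun _ => (X 0 : MvPolynomial (Fin 1) ℂ)) K = 0 := by
    have h3 := congrArg (aeval (fun _ => (X 0 : MvPolynomial (Fin 1) ℂ))) hKanti
    rw [diag_rename, map_neg] at h3
    have h4 : (2 : MvPolynomial (Fin 1) ℂ) * aeval (fun _ => (X 0 : MvPolynomial (Fin 1) ℂ)) K
        = 0 := by linear_combination h3
    rcases mul_eq_zero.mp h4 with h5 | h5
    · exact absurd h5 two_ne_zero
    · exact h5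
  obtain ⟨K2, hK2⟩ := dvd_of_diag K hKdiag
  exact ⟨K2, by rw [hK, hK2]; ring⟩

private lemma diag_id (g : ℕ) (ν : ℤ → ℂ) (hνm2 : ν (-2) = 0) (e : ℂ) :
    ∑ i ∈ Finset.range (g+2), e^i * e^i *
        (2 * ν (4*(g:ℤ)+4-4*(i:ℤ)) + ν (4*(g:ℤ)+2-4*(i:ℤ)) * (e+e))
      = 2 * Nfun g ν e := by
  have h1 : 2 * Nfun g ν e
      = ∑ j ∈ Finset.range (2*g+3), 2 * ν (4*(g:ℤ)+4-2*(j:ℤ)) * e^j := by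
    rw [Nfun, Finset.mul_sum,
      ← Finset.sum_range_reflect (fun j => 2 * (ν (2*(j:ℤ)) * e^(2*g+2-j))) (2*g+3)]
    apply Finset.sum_congr rfl
    intro j hj
    rw [Finset.mem_range] at hj
    have h2 : 2*g+3-1-j = 2*g+2-j := by omega
    have h3 : 2*g+2-(2*g+2-j) = j := by omega
    have h4 : (2:ℤ)*((2*g+2-j : ℕ) : ℤ) = 4*(g:ℤ)+4-2*(j:ℤ) := by omega
    rw [h2, h3, h4]
    ring
  rw [h1, show 2*g+3 = 2*(g+1)+1 by ring,
    sum_range_odd_split (g+1) (fun j => 2 * ν (4*(g:ℤ)+4-2*(j:ℤ)) * e^j)]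
  have hext : ∑ i ∈ Finset.range (g+2), 2 * ν (4*(g:ℤ)+4-2*((2*i+1:ℕ):ℤ)) * e^(2*i+1)
      = ∑ i ∈ Finset.range (g+1), 2 * ν (4*(g:ℤ)+4-2*((2*i+1:ℕ):ℤ)) * e^(2*i+1) := by
    rw [Finset.sum_range_succ]
    have h5 : (4*(g:ℤ)+4-2*((2*(g+1)+1:ℕ):ℤ)) = -2 := by push_cast; ring
    rw [h5, hνm2]
    ring
  rw [← hext, ← Finset.sum_add_distrib]
  apply Finset.sum_congr rfl
  intro i _
  have c1 : ((2*i:ℕ):ℤ) = 2*(i:ℤ) := by push_cast; ring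
  have c2 : ((2*i+1:ℕ):ℤ) = 2*(i:ℤ)+1 := by push_cast; ring
  rw [c1, c2]
  have c3 : 4*(g:ℤ)+4-2*(2*(i:ℤ)) = 4*(g:ℤ)+4-4*(i:ℤ) := by ring
  have c4 : 4*(g:ℤ)+4-2*(2*(i:ℤ)+1) = 4*(g:ℤ)+2-4*(i:ℤ) := by ring
  rw [c3, c4]
  ring

private lemma eval_Npoly (g : ℕ) (ν : ℤ → ℂ) (v : Fin 2) (x : Fin 2 → ℂ) :
    eval x (Npoly g ν v) = Nfun g ν (x v) := by
  simp [Npoly, Nfun]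

private lemma eval_Rpoly (g : ℕ) (a : ℂ) (xs : Fin g → ℂ) (v : Fin 2) (x : Fin 2 → ℂ) :
    eval x (Rpoly g a xs v) = Rfun g a xs (x v) := by
  simp [Rpoly, Rfun]

private lemma eval_fpoly (g : ℕ) (ν : ℤ → ℂ) (x : Fin 2 → ℂ) :
    eval x (fpoly g ν) = ∑ i ∈ Finset.range (g+2), (x 0)^i * (x 1)^i *
      (2 * ν (4*(g:ℤ)+4-4*(i:ℤ)) + ν (4*(g:ℤ)+2-4*(i:ℤ)) * (x 0 + x 1)) := by
  simp [fpoly]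

private lemma eval_via_poly (e1 e2 : ℂ) (P : MvPolynomial (Fin 2) ℂ) :
    MvPolynomial.eval ![e1, e2] P
      = Polynomial.eval e2 (aeval ![Polynomial.C e1, Polynomial.X] P) := by
  induction P using MvPolynomial.induction_on with
  | C c => simp
  | add p q hp hq => simp [hp, hq]
  | mul_X p i hp =>
    rw [map_mul, map_mul, Polynomial.eval_mul, ← hp]
    congr 1
    fin_cases i <;> simp

/-- `F(e₁,e₁) = 0` and `(∂F/∂e₂)|_{e₂=e₁} = 0` for all `e₁`;
consequently `F(e₁,e₂)` is divisible by `(e₁-e₂)²` in `ℂ[e₁,e₂]`. -/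
theorem stmt_4 (g : ℕ) (hg : 1 ≤ g) (ν : ℤ → ℂ) (hν0 : ν 0 ≠ 0) (hνm2 : ν (-2) = 0)
    (a : ℂ) (ha : Nfun g ν a = 0)
    (x y : Fin g → ℂ) (hxy : ∀ i, (y i)^2 = Nfun g ν (x i))
    (hx : Function.Injective x) (hxa : ∀ i, x i ≠ a) :
    (∀ e1 : ℂ, MvPolynomial.eval ![e1, e1] (Fpoly g ν a x y) = 0 ∧
      deriv (fun e2 => MvPolynomial.eval ![e1, e2] (Fpoly g ν a x y)) e1 = 0) ∧
    (X 0 - X 1)^2 ∣ Fpoly g ν a x y := by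
  -- the divisibility statement
  have hdvd : (X 0 - X 1 : MvPolynomial (Fin 2) ℂ)^2 ∣ Fpoly g ν a x y := by
    have hH : ((X 0 - X 1 : MvPolynomial (Fin 2) ℂ))^2 ∣
        (fpoly g ν * Rpoly g a x 0 * Rpoly g a x 1
          - Npoly g ν 0 * (Rpoly g a x 1)^2 - Npoly g ν 1 * (Rpoly g a x 0)^2) := by
      apply sq_dvd_of_diag_symm
      · -- symmetry
        apply MvPolynomial.funext
        intro z
        rw [eval_rename]
        simp only [map_sub, map_mul, map_pow]
        rw [eval_fpoly, eval_fpoly, eval_Npoly, eval_Npoly, eval_Npoly, eval_Npoly,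
          eval_Rpoly, eval_Rpoly, eval_Rpoly, eval_Rpoly]
        have h0 : (z ∘ Equiv.swap (0:Fin 2) 1) 0 = z 1 := by
          simp [Equiv.swap_apply_left]
        have h1 : (z ∘ Equiv.swap (0:Fin 2) 1) 1 = z 0 := by
          simp [Equiv.swap_apply_right]
        rw [h0, h1]
        have hfe : ∑ i ∈ Finset.range (g+2), (z 1)^i * (z 0)^i *
            (2 * ν (4*(g:ℤ)+4-4*(i:ℤ)) + ν (4*(g:ℤ)+2-4*(i:ℤ)) * (z 1 + z 0))
            = ∑ i ∈ Finset.range (g+2), (z 0)^i * (z 1)^i *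
            (2 * ν (4*(g:ℤ)+4-4*(i:ℤ)) + ν (4*(g:ℤ)+2-4*(i:ℤ)) * (z 0 + z 1)) :=
          Finset.sum_congr rfl (fun i _ => by ring)
        rw [hfe]
        ring
      · -- vanishing on the diagonal
        apply MvPolynomial.funext
        intro z
        rw [map_zero, eval_aeval_comp]
        simp only [map_sub, map_mul, map_pow]
        rw [eval_fpoly, eval_Npoly, eval_Npoly, eval_Rpoly, eval_Rpoly]
        rw [diag_id g ν hνm2 (z 0)]
        ring
    have hF : Fpoly g ν a x y
        = (fpoly g ν * Rpoly g a x 0 * Rpoly g a x 1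
            - Npoly g ν 0 * (Rpoly g a x 1)^2 - Npoly g ν 1 * (Rpoly g a x 0)^2)
          + (X 0 - X 1)^2 * (Spoly g a x y)^2 := by
      rw [Fpoly]; ring
    rw [hF]
    exact dvd_add hH (Dvd.intro _ rfl)
  obtain ⟨Q, hQ⟩ := id hdvd
  refine ⟨fun e1 => ⟨?_, ?_⟩, hdvd⟩
  · rw [hQ]
    simp
  · have hfun : (fun e2 => MvPolynomial.eval ![e1, e2] (Fpoly g ν a x y))
        = fun e2 => Polynomial.eval e2
            (aeval ![Polynomial.C e1, Polynomial.X] (Fpoly g ν a x y)) :=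
      funext fun e2 => by exact eval_via_poly e1 e2 (Fpoly g ν a x y)
    rw [hfun, Polynomial.deriv]
    have hp : aeval ![Polynomial.C e1, Polynomial.X] (Fpoly g ν a x y)
        = (Polynomial.C e1 - Polynomial.X)^2
            * aeval ![Polynomial.C e1, Polynomial.X] Q := by
      rw [hQ, map_mul, map_pow, map_sub, aeval_X, aeval_X]
      simp
    rw [hp]
    simp [Polynomial.derivative_mul, Polynomial.derivative_pow]
end

section
/- There exists a symmetric polynomial G(e_1,e_2) ∈ ℂ[e_1,e_2], of degree at most g−1 in each variable, such that F(e_1,e_2) = (e_1−e_2)² R(e_1) R(e_2) G(e_1,e_2). -/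
open MvPolynomial

noncomputable def fse := MvPolynomial.finSuccEquiv ℂ 1

lemma fse_X0 : fse (X 0) = Polynomial.X := finSuccEquiv_X_zero
lemma fse_X1 : fse (X 1) = Polynomial.C (X 0) := by
  have h : (1 : Fin 2) = Fin.succ 0 := rfl
  rw [fse, h, finSuccEquiv_X_succ]
lemma fse_C (r : ℂ) : fse (C r) = Polynomial.C (C r) := by
  simp [fse, finSuccEquiv_apply]

lemma eval_eval_fse (p : MvPolynomial (Fin 2) ℂ) (b : MvPolynomial (Fin 1) ℂ) (z : Fin 1 → ℂ) :
    eval z (Polynomial.eval b (fse p)) = eval ![eval z b, z 0] p := by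
  induction p using MvPolynomial.induction_on with
  | C r => simp [fse_C]
  | add p q hp hq => simp [map_add, hp, hq]
  | mul_X p i hp =>
      fin_cases i <;> simp [map_mul, hp, fse_X0, fse_X1]

lemma dvd_of_fse (p q : MvPolynomial (Fin 2) ℂ) (h : fse p ∣ fse q) : p ∣ q :=
  (map_dvd_iff (fse : MvPolynomial (Fin 2) ℂ ≃ₐ[ℂ] _)).mp h

lemma dvd_X0_sub_C {p : MvPolynomial (Fin 2) ℂ} {c : ℂ}
    (h : ∀ t, eval ![c, t] p = 0) : (X 0 - C c) ∣ p := by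
  apply dvd_of_fse
  rw [map_sub, fse_X0, fse_C]
  refine Polynomial.dvd_iff_isRoot.mpr ?_
  rw [Polynomial.IsRoot.def]
  refine MvPolynomial.funext (R := ℂ) fun z => ?_
  rw [eval_eval_fse, map_zero]
  simpa using h (z 0)

lemma dvd_X0_sub_X1 {p : MvPolynomial (Fin 2) ℂ}
    (h : ∀ t, eval ![t, t] p = 0) : (X 0 - X 1) ∣ p := by
  apply dvd_of_fse
  rw [map_sub, fse_X0, fse_X1]
  refine Polynomial.dvd_iff_isRoot.mpr ?_
  rw [Polynomial.IsRoot.def]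
  refine MvPolynomial.funext (R := ℂ) fun z => ?_
  rw [eval_eval_fse, map_zero]
  simpa using h (z 0)

noncomputable def sw : MvPolynomial (Fin 2) ℂ ≃ₐ[ℂ] MvPolynomial (Fin 2) ℂ :=
  renameEquiv ℂ (Equiv.swap (0 : Fin 2) 1)

lemma sw_X0 : sw (X 0) = X 1 := by simp [sw]
lemma sw_X1 : sw (X 1) = X 0 := by simp [sw]
lemma sw_C (r : ℂ) : sw (C r) = C r := by simp [sw]

lemma comp_swap (z : Fin 2 → ℂ) : z ∘ (Equiv.swap (0 : Fin 2) 1) = ![z 1, z 0] := by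
  funext v; fin_cases v <;> simp

lemma eval_sw (z : Fin 2 → ℂ) (p : MvPolynomial (Fin 2) ℂ) :
    eval z (sw p) = eval ![z 1, z 0] p := by
  rw [sw, renameEquiv_apply, eval_rename, comp_swap]

lemma dvd_X1_sub_C {p : MvPolynomial (Fin 2) ℂ} {c : ℂ}
    (h : ∀ t, eval ![t, c] p = 0) : (X 1 - C c) ∣ p := by
  have h2 : (sw (X 1 - C c)) ∣ sw p := by
    rw [map_sub, sw_X1, sw_C]
    apply dvd_X0_sub_C
    intro t
    rw [eval_sw]
    simpa using h t
  exact (map_dvd_iff sw).mp h2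

lemma ne_zero_of_eval {σ : Type*} {p : MvPolynomial σ ℂ} (z : σ → ℂ)
    (h : eval z p ≠ 0) : p ≠ 0 := fun h0 => by simp [h0] at h

lemma not_dvd_of_eval {p q : MvPolynomial (Fin 2) ℂ} (z : Fin 2 → ℂ)
    (hp : eval z p = 0) (hq : eval z q ≠ 0) : ¬ p ∣ q := by
  rintro ⟨m, rfl⟩
  rw [map_mul, hp, zero_mul] at hq
  exact hq rfl

lemma prime_X0_sub_C (c : ℂ) : Prime (X 0 - C c : MvPolynomial (Fin 2) ℂ) := by
  rw [← MulEquiv.prime_iff (fse : MvPolynomial (Fin 2) ℂ ≃ₐ[ℂ] _).toMulEquiv]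
  show Prime (fse (X 0 - C c))
  rw [map_sub, fse_X0, fse_C]
  exact Polynomial.prime_X_sub_C _

lemma prime_X1_sub_C (c : ℂ) : Prime (X 1 - C c : MvPolynomial (Fin 2) ℂ) := by
  rw [← MulEquiv.prime_iff sw.toMulEquiv]
  show Prime (sw (X 1 - C c))
  rw [map_sub, sw_X1, sw_C]
  exact prime_X0_sub_C c

lemma prime_X0_sub_X1 : Prime (X 0 - X 1 : MvPolynomial (Fin 2) ℂ) := by
  rw [← MulEquiv.prime_iff (fse : MvPolynomial (Fin 2) ℂ ≃ₐ[ℂ] _).toMulEquiv]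
  show Prime (fse (X 0 - X 1))
  rw [map_sub, fse_X0, fse_X1]
  exact Polynomial.prime_X_sub_C _

lemma relprime_of_prime_not_dvd {p q : MvPolynomial (Fin 2) ℂ}
    (hp : Prime p) (h : ¬ p ∣ q) : IsRelPrime p q :=
  hp.irreducible.isRelPrime_iff_not_dvd.mpr h

lemma relprime_X_sub_C_same (v : Fin 2) {c c' : ℂ} (h : c ≠ c') :
    IsRelPrime (X v - C c : MvPolynomial (Fin 2) ℂ) (X v - C c') := by
  apply IsCoprime.isRelPrime
  refine ⟨C (c' - c)⁻¹, -C (c' - c)⁻¹, ?_⟩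
  have h1 : (C (c' - c)⁻¹ : MvPolynomial (Fin 2) ℂ) * C (c' - c) = 1 := by
    rw [← C_mul, inv_mul_cancel₀ (sub_ne_zero.mpr (Ne.symm h)), C_1]
  calc C (c' - c)⁻¹ * (X v - C c) + -C (c' - c)⁻¹ * (X v - C c')
      = C (c' - c)⁻¹ * (C c' - C c) := by ring
    _ = C (c' - c)⁻¹ * C (c' - c) := by rw [← C_sub]
    _ = 1 := h1

noncomputable def ffun (g : ℕ) (ν : ℤ → ℂ) (s t : ℂ) : ℂ :=
  ∑ i ∈ Finset.range (g+2), s^i * t^i *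
    (2 * ν (4*(g:ℤ)+4-4*(i:ℤ)) + ν (4*(g:ℤ)+2-4*(i:ℤ)) * (s + t))

noncomputable def Sfun (g : ℕ) (a : ℂ) (x y : Fin g → ℂ) (s t : ℂ) : ℂ :=
  ∑ i : Fin g, (y i / deriv (Rfun g a x) (x i)) *
    ((s - a) * ∏ j ∈ Finset.univ.erase i, (s - x j)) *
    ((t - a) * ∏ j ∈ Finset.univ.erase i, (t - x j))

noncomputable def Ffun (g : ℕ) (ν : ℤ → ℂ) (a : ℂ) (x y : Fin g → ℂ) (s t : ℂ) : ℂ :=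
  ffun g ν s t * Rfun g a x s * Rfun g a x t + (s - t)^2 * (Sfun g a x y s t)^2
    - Nfun g ν s * (Rfun g a x t)^2 - Nfun g ν t * (Rfun g a x s)^2

section evals
variable (g : ℕ) (ν : ℤ → ℂ) (a : ℂ) (x y : Fin g → ℂ) (s t : ℂ)

lemma eval_Npoly0 : eval ![s,t] (Npoly g ν 0) = Nfun g ν s := by
  simp [Npoly, Nfun]

lemma eval_Npoly1 : eval ![s,t] (Npoly g ν 1) = Nfun g ν t := by
  simp [Npoly, Nfun]

lemma eval_Rpoly0 : eval ![s,t] (Rpoly g a x 0) = Rfun g a x s := by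
  simp [Rpoly, Rfun]

lemma eval_Rpoly1 : eval ![s,t] (Rpoly g a x 1) = Rfun g a x t := by
  simp [Rpoly, Rfun]

lemma eval_fpoly_s5 : eval ![s,t] (fpoly g ν) = ffun g ν s t := by
  simp [fpoly, ffun]

lemma eval_Spoly : eval ![s,t] (Spoly g a x y) = Sfun g a x y s t := by
  simp [Spoly, Sfun]

lemma eval_Fpoly : eval ![s,t] (Fpoly g ν a x y) = Ffun g ν a x y s t := by
  simp [Fpoly, Ffun, eval_Npoly0, eval_Npoly1, eval_Rpoly0, eval_Rpoly1, eval_fpoly_s5, eval_Spoly]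

end evals

section scalars
variable {g : ℕ} {ν : ℤ → ℂ} {a : ℂ} {x y : Fin g → ℂ}

lemma Rfun_a : Rfun g a x a = 0 := by simp [Rfun]

lemma Rfun_x (k : Fin g) : Rfun g a x (x k) = 0 := by
  rw [Rfun]
  exact mul_eq_zero_of_right _ (Finset.prod_eq_zero (Finset.mem_univ k) (sub_self _))

lemma derivative_finset_prod {ι : Type*} [DecidableEq ι] (s : Finset ι) (f : ι → Polynomial ℂ) :
    Polynomial.derivative (∏ i ∈ s, f i)
      = ∑ i ∈ s, (∏ j ∈ s.erase i, f j) * Polynomial.derivative (f i) := by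
  induction s using Finset.induction_on with
  | empty => simp
  | @insert a s ha ih =>
      rw [Finset.prod_insert ha, Polynomial.derivative_mul, ih, Finset.mul_sum,
        Finset.sum_insert ha, Finset.erase_insert ha]
      have hsum : ∀ i ∈ s, (∏ j ∈ (insert a s).erase i, f j) * Polynomial.derivative (f i)
          = f a * ((∏ j ∈ s.erase i, f j) * Polynomial.derivative (f i)) := by
        intro i hi
        have hia : a ≠ i := fun h => ha (h ▸ hi)
        rw [Finset.erase_insert_of_ne hia, Finset.prod_insert
          (fun hmem => ha (Finset.mem_of_mem_erase hmem)), mul_assoc]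
      rw [Finset.sum_congr rfl hsum]
      ring

lemma deriv_Rfun_ne (hx : Function.Injective x) (hxa : ∀ i, x i ≠ a) (k : Fin g) :
    deriv (Rfun g a x) (x k) ≠ 0 := by
  rw [deriv_Rfun k]
  refine mul_ne_zero (sub_ne_zero.mpr (hxa k)) (Finset.prod_ne_zero_iff.mpr fun j hj => ?_)
  exact sub_ne_zero.mpr fun hh => (Finset.mem_erase.mp hj).1 (hx hh).symm

lemma Sfun_a (t : ℂ) : Sfun g a x y a t = 0 := by
  simp [Sfun]

lemma Sfun_x (hx : Function.Injective x) (hxa : ∀ i, x i ≠ a) (k : Fin g) (t : ℂ) :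
    Sfun g a x y (x k) t = y k * ((t - a) * ∏ j ∈ Finset.univ.erase k, (t - x j)) := by
  classical
  have hD : (x k - a) * ∏ j ∈ Finset.univ.erase k, (x k - x j) ≠ 0 := by
    refine mul_ne_zero (sub_ne_zero.mpr (hxa k)) (Finset.prod_ne_zero_iff.mpr fun j hj => ?_)
    exact sub_ne_zero.mpr fun hh => (Finset.mem_erase.mp hj).1 (hx hh).symm
  rw [Sfun, Finset.sum_eq_single k]
  · rw [deriv_Rfun k, div_mul_cancel₀ _ hD]
  · intro i _ hik
    refine mul_eq_zero_of_left (mul_eq_zero_of_right _ ?_) _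
    exact mul_eq_zero_of_right _ (Finset.prod_eq_zero
      (Finset.mem_erase.mpr ⟨hik.symm, Finset.mem_univ k⟩) (sub_self _))
  · simp

lemma Ffun_a (ha : Nfun g ν a = 0) (t : ℂ) : Ffun g ν a x y a t = 0 := by
  rw [Ffun, Rfun_a, Sfun_a, ha]
  ring

lemma Ffun_x (hx : Function.Injective x) (hxa : ∀ i, x i ≠ a)
    (hxy : ∀ i, (y i)^2 = Nfun g ν (x i)) (k : Fin g) (t : ℂ) :
    Ffun g ν a x y (x k) t = 0 := by
  rw [Ffun, Rfun_x k, Sfun_x hx hxa k t, ← hxy k]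
  have hR : Rfun g a x t = (t - a) * ((t - x k) * ∏ j ∈ Finset.univ.erase k, (t - x j)) := by
    rw [Rfun, ← Finset.mul_prod_erase _ _ (Finset.mem_univ k)]
  rw [hR]
  ring

lemma sum_pair (A : ℕ → ℂ) (n : ℕ) :
    ∑ i ∈ Finset.range n, (A (2*i) + A (2*i+1)) = ∑ m ∈ Finset.range (2*n), A m := by
  induction n with
  | zero => simp
  | succ n ih =>
      rw [Finset.sum_range_succ, ih]
      have h : 2*(n+1) = (2*n+1)+1 := by ring
      rw [h, Finset.sum_range_succ, Finset.sum_range_succ]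
      ring

lemma key_sum (hνm2 : ν (-2) = 0) (t : ℂ) : ffun g ν t t = 2 * Nfun g ν t := by
  classical
  set A : ℕ → ℂ := fun m => ν (4*(g:ℤ)+4-2*(m:ℤ)) * t^m with hA
  have step1 : ffun g ν t t = 2 * ∑ m ∈ Finset.range (2*(g+2)), A m := by
    rw [← sum_pair A (g+2), ffun, Finset.mul_sum]
    refine Finset.sum_congr rfl fun i _ => ?_
    have e1 : (4*(g:ℤ)+4-2*((2*i : ℕ):ℤ)) = 4*(g:ℤ)+4-4*(i:ℤ) := by push_cast; ring
    have e2 : (4*(g:ℤ)+4-2*((2*i+1 : ℕ):ℤ)) = 4*(g:ℤ)+2-4*(i:ℤ) := by push_cast; ring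
    simp only [hA, e1, e2, pow_add, pow_mul]
    ring
  have step2 : Nfun g ν t = ∑ m ∈ Finset.range (2*g+3), A m := by
    rw [← Finset.sum_range_reflect A (2*g+3), Nfun]
    refine Finset.sum_congr rfl fun i hi => ?_
    have hi' : i ≤ 2*g+2 := Nat.lt_succ_iff.mp (Finset.mem_range.mp hi)
    have e3 : 2*g+3-1-i = 2*g+2-i := by omega
    have e4 : (4*(g:ℤ)+4-2*((2*g+2-i : ℕ):ℤ)) = 2*(i:ℤ) := by
      push_cast [Nat.cast_sub hi']
      ring
    rw [hA, e3]
    simp only [e4]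
  have step3 : (2*(g+2)) = (2*g+3)+1 := by ring
  rw [step1, step3, Finset.sum_range_succ, step2]
  have e5 : (4*(g:ℤ)+4-2*((2*g+3 : ℕ):ℤ)) = -2 := by push_cast; ring
  have : A (2*g+3) = 0 := by rw [hA]; simp only [e5, hνm2, zero_mul]
  rw [this, add_zero]

lemma Ffun_diag (hνm2 : ν (-2) = 0) (t : ℂ) : Ffun g ν a x y t t = 0 := by
  rw [Ffun, key_sum hνm2]
  ring

lemma ffun_symm (s t : ℂ) : ffun g ν s t = ffun g ν t s := by
  rw [ffun, ffun]
  exact Finset.sum_congr rfl fun i _ => by ring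

lemma Sfun_symm (s t : ℂ) : Sfun g a x y s t = Sfun g a x y t s := by
  rw [Sfun, Sfun]
  exact Finset.sum_congr rfl fun i _ => by ring

lemma Ffun_symm (s t : ℂ) : Ffun g ν a x y s t = Ffun g ν a x y t s := by
  rw [Ffun, Ffun, ffun_symm, Sfun_symm]
  ring

end scalars

section degrees
variable {g : ℕ} {ν : ℤ → ℂ} {a : ℂ} {x y : Fin g → ℂ}

lemma deg_lin (v w : Fin 2) (c : ℂ) :
    degreeOf v (X w - C c : MvPolynomial (Fin 2) ℂ) ≤ if v = w then 1 else 0 := by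
  refine (degreeOf_sub_le v _ _).trans ?_
  simp [degreeOf_X, degreeOf_C]

lemma deg_lin_self (v : Fin 2) (c : ℂ) :
    degreeOf v (X v - C c : MvPolynomial (Fin 2) ℂ) ≤ 1 := by
  simpa using deg_lin v v c

lemma deg_prod_lin {ι : Type*} (v w : Fin 2) (s : Finset ι) (c : ι → ℂ) :
    degreeOf v (∏ j ∈ s, (X w - C (c j)) : MvPolynomial (Fin 2) ℂ)
      ≤ s.card * (if v = w then 1 else 0) := by
  refine (degreeOf_prod_le v s _).trans ?_
  calc ∑ j ∈ s, degreeOf v (X w - C (c j) : MvPolynomial (Fin 2) ℂ)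
      ≤ ∑ _j ∈ s, (if v = w then 1 else 0) := Finset.sum_le_sum fun j _ => deg_lin v w (c j)
    _ = s.card * (if v = w then 1 else 0) := by rw [Finset.sum_const, smul_eq_mul]

lemma deg0_Rpoly0 : degreeOf 0 (Rpoly g a x 0) ≤ g + 1 := by
  rw [Rpoly]
  refine (degreeOf_mul_le _ _ _).trans ?_
  have h1 := deg_lin_self (0 : Fin 2) a
  have h2 := deg_prod_lin (0 : Fin 2) 0 Finset.univ x
  simp only [if_pos rfl, mul_one, Finset.card_univ, Fintype.card_fin] at h2
  norm_num at h2
  omega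

lemma deg0_Rpoly1 : degreeOf 0 (Rpoly g a x 1) ≤ 0 := by
  rw [Rpoly]
  refine (degreeOf_mul_le _ _ _).trans ?_
  have h1 := deg_lin (0 : Fin 2) 1 a
  have h2 := deg_prod_lin (0 : Fin 2) 1 Finset.univ x
  norm_num at h1 h2
  omega

lemma deg0_Npoly0 : degreeOf 0 (Npoly g ν 0) ≤ 2*g + 2 := by
  rw [Npoly]
  refine (degreeOf_sum_le _ _ _).trans (Finset.sup_le fun i _ => ?_)
  refine (degreeOf_mul_le _ _ _).trans ?_
  have h1 : degreeOf (0 : Fin 2) (C (ν (2*(i:ℤ))) : MvPolynomial (Fin 2) ℂ) = 0 := degreeOf_C _ _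
  have h2 : degreeOf (0 : Fin 2) ((X 0 : MvPolynomial (Fin 2) ℂ)^(2*g+2-i)) ≤ (2*g+2-i) * 1 := by
    refine (degreeOf_pow_le _ _ _).trans ?_
    have : degreeOf (0 : Fin 2) (X 0 : MvPolynomial (Fin 2) ℂ) ≤ 1 := by simp [degreeOf_X]
    exact Nat.mul_le_mul_left _ this
  omega

lemma deg0_Npoly1 : degreeOf 0 (Npoly g ν 1) ≤ 0 := by
  rw [Npoly]
  refine (degreeOf_sum_le _ _ _).trans (Finset.sup_le fun i _ => ?_)
  refine (degreeOf_mul_le _ _ _).trans ?_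
  have h1 : degreeOf (0 : Fin 2) (C (ν (2*(i:ℤ))) : MvPolynomial (Fin 2) ℂ) = 0 := degreeOf_C _ _
  have h2 : degreeOf (0 : Fin 2) ((X 1 : MvPolynomial (Fin 2) ℂ)^(2*g+2-i)) ≤ 0 := by
    refine (degreeOf_pow_le _ _ _).trans ?_
    simp [degreeOf_X]
  omega

lemma deg0_X0pow (i : ℕ) : degreeOf 0 ((X 0 : MvPolynomial (Fin 2) ℂ)^i) ≤ i := by
  refine (degreeOf_pow_le _ _ _).trans ?_
  have : degreeOf (0 : Fin 2) (X 0 : MvPolynomial (Fin 2) ℂ) ≤ 1 := by simp [degreeOf_X]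
  calc i * degreeOf (0 : Fin 2) (X 0 : MvPolynomial (Fin 2) ℂ) ≤ i * 1 :=
        Nat.mul_le_mul_left _ this
    _ = i := mul_one i

lemma deg0_X1pow (i : ℕ) : degreeOf 0 ((X 1 : MvPolynomial (Fin 2) ℂ)^i) ≤ 0 := by
  refine (degreeOf_pow_le _ _ _).trans ?_
  simp [degreeOf_X]

lemma deg0_fpoly (hνm2 : ν (-2) = 0) : degreeOf 0 (fpoly g ν) ≤ g + 1 := by
  rw [fpoly, Finset.sum_range_succ]
  refine (degreeOf_add_le _ _ _).trans (max_le ?_ ?_)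
  · refine (degreeOf_sum_le _ _ _).trans (Finset.sup_le fun i hi => ?_)
    have hi' : i ≤ g := Nat.lt_succ_iff.mp (Finset.mem_range.mp hi)
    refine (degreeOf_mul_le _ _ _).trans ?_
    have h1 := deg0_X0pow i
    have h2 := deg0_X1pow i
    have h3 : degreeOf (0 : Fin 2)
        (C (2 * ν (4*(g:ℤ)+4-4*(i:ℤ))) + C (ν (4*(g:ℤ)+2-4*(i:ℤ))) * (X 0 + X 1)) ≤ 1 := by
      refine (degreeOf_add_le _ _ _).trans (max_le ?_ ?_)
      · exact le_trans (le_of_eq (degreeOf_C _ _)) (Nat.zero_le 1)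
      · refine (degreeOf_mul_le _ _ _).trans ?_
        have h4 : degreeOf (0 : Fin 2) ((X 0 : MvPolynomial (Fin 2) ℂ) + X 1) ≤ 1 := by
          refine (degreeOf_add_le _ _ _).trans (max_le ?_ ?_) <;> simp [degreeOf_X]
        simp only [degreeOf_C]
        omega
    have h5 : degreeOf (0 : Fin 2) ((X 0 : MvPolynomial (Fin 2) ℂ)^i * (X 1)^i)
        ≤ i := (degreeOf_mul_le _ _ _).trans (by omega)
    omega
  · have he : (4*(g:ℤ)+2-4*((g+1 : ℕ):ℤ)) = -2 := by push_cast; ring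
    rw [he, hνm2, map_zero, zero_mul, add_zero]
    refine (degreeOf_mul_le _ _ _).trans ?_
    have h1 : degreeOf (0 : Fin 2) ((X 0 : MvPolynomial (Fin 2) ℂ)^(g+1) * (X 1)^(g+1))
        ≤ g + 1 := by
      refine (degreeOf_mul_le _ _ _).trans ?_
      have := deg0_X0pow (g+1)
      have := deg0_X1pow (g+1)
      omega
    have h2 : degreeOf (0 : Fin 2)
        (C (2 * ν (4*(g:ℤ)+4-4*((g+1 : ℕ):ℤ))) : MvPolynomial (Fin 2) ℂ) = 0 := degreeOf_C _ _
    omega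

lemma deg0_Spoly : degreeOf 0 (Spoly g a x y) ≤ g := by
  rw [Spoly]
  refine (degreeOf_sum_le _ _ _).trans (Finset.sup_le fun i _ => ?_)
  refine (degreeOf_mul_le _ _ _).trans ?_
  have h1 : degreeOf (0 : Fin 2) (C (y i / deriv (Rfun g a x) (x i)) *
      ((X 0 - C a) * ∏ j ∈ Finset.univ.erase i, (X 0 - C (x j))) : MvPolynomial (Fin 2) ℂ)
      ≤ g := by
    refine (degreeOf_mul_le _ _ _).trans ?_
    have h2 := deg_lin_self (0 : Fin 2) a
    have h3 := deg_prod_lin (0 : Fin 2) 0 (Finset.univ.erase i) x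
    have hcard : (Finset.univ.erase i).card = g - 1 := by
      rw [Finset.card_erase_of_mem (Finset.mem_univ i), Finset.card_univ, Fintype.card_fin]
    rw [hcard, if_pos rfl, mul_one] at h3
    have h4 : degreeOf (0 : Fin 2)
        ((X 0 - C a) * ∏ j ∈ Finset.univ.erase i, (X 0 - C (x j)) : MvPolynomial (Fin 2) ℂ)
        ≤ 1 + (g - 1) := (degreeOf_mul_le _ _ _).trans (by omega)
    have h5 : degreeOf (0 : Fin 2)
        (C (y i / deriv (Rfun g a x) (x i)) : MvPolynomial (Fin 2) ℂ) = 0 := degreeOf_C _ _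
    have hg1 : (1 : ℕ) ≤ g := Fin.pos i
    omega
  have h6 : degreeOf (0 : Fin 2)
      ((X 1 - C a) * ∏ j ∈ Finset.univ.erase i, (X 1 - C (x j)) : MvPolynomial (Fin 2) ℂ)
      ≤ 0 := by
    refine (degreeOf_mul_le _ _ _).trans ?_
    have h2 := deg_lin (0 : Fin 2) 1 a
    have h3 := deg_prod_lin (0 : Fin 2) 1 (Finset.univ.erase i) x
    norm_num at h2 h3
    omega
  omega

lemma deg0_Fpoly (hνm2 : ν (-2) = 0) : degreeOf 0 (Fpoly g ν a x y) ≤ 2*g + 2 := by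
  rw [Fpoly]
  have hA : degreeOf (0 : Fin 2) (fpoly g ν * Rpoly g a x 0 * Rpoly g a x 1) ≤ 2*g+2 := by
    refine (degreeOf_mul_le _ _ _).trans ?_
    have h1 : degreeOf (0 : Fin 2) (fpoly g ν * Rpoly g a x 0) ≤ 2*g+2 := by
      refine (degreeOf_mul_le _ _ _).trans ?_
      have := deg0_fpoly (g := g) hνm2
      have := deg0_Rpoly0 (g := g) (a := a) (x := x)
      omega
    have := deg0_Rpoly1 (g := g) (a := a) (x := x)
    omega
  have hB : degreeOf (0 : Fin 2) ((X 0 - X 1)^2 * (Spoly g a x y)^2) ≤ 2*g+2 := by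
    refine (degreeOf_mul_le _ _ _).trans ?_
    have h1' : degreeOf (0 : Fin 2) ((X 0 - X 1 : MvPolynomial (Fin 2) ℂ)^2) ≤ 2 := by
      refine (degreeOf_pow_le _ _ _).trans ?_
      have : degreeOf (0 : Fin 2) (X 0 - X 1 : MvPolynomial (Fin 2) ℂ) ≤ 1 := by
        refine (degreeOf_sub_le _ _ _).trans (max_le ?_ ?_) <;> simp [degreeOf_X]
      omega
    have h2 : degreeOf (0 : Fin 2) ((Spoly g a x y)^2) ≤ 2*g := by
      refine (degreeOf_pow_le _ _ _).trans ?_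
      have := deg0_Spoly (g := g) (a := a) (x := x) (y := y)
      omega
    omega
  have hC : degreeOf (0 : Fin 2) (Npoly g ν 0 * (Rpoly g a x 1)^2) ≤ 2*g+2 := by
    refine (degreeOf_mul_le _ _ _).trans ?_
    have h1 : degreeOf (0 : Fin 2) ((Rpoly g a x 1)^2) ≤ 0 := by
      refine (degreeOf_pow_le _ _ _).trans ?_
      have := deg0_Rpoly1 (g := g) (a := a) (x := x)
      omega
    have := deg0_Npoly0 (g := g) (ν := ν)
    omega
  have hD : degreeOf (0 : Fin 2) (Npoly g ν 1 * (Rpoly g a x 0)^2) ≤ 2*g+2 := by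
    refine (degreeOf_mul_le _ _ _).trans ?_
    have h1 : degreeOf (0 : Fin 2) ((Rpoly g a x 0)^2) ≤ 2*(g+1) := by
      refine (degreeOf_pow_le _ _ _).trans ?_
      have := deg0_Rpoly0 (g := g) (a := a) (x := x)
      omega
    have := deg0_Npoly1 (g := g) (ν := ν)
    omega
  refine (degreeOf_sub_le _ _ _).trans (max_le ((degreeOf_sub_le _ _ _).trans
    (max_le ((degreeOf_add_le _ _ _).trans (max_le hA hB)) hC)) hD)

end degrees

section images
variable {g : ℕ} {a : ℂ} {x : Fin g → ℂ}

lemma fse_q : fse (X 0 - X 1 : MvPolynomial (Fin 2) ℂ) = Polynomial.X - Polynomial.C (X 0) := by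
  rw [map_sub, fse_X0, fse_X1]

lemma fse_Rpoly0 : fse (Rpoly g a x 0) =
    (Polynomial.X - Polynomial.C (C a)) * ∏ i, (Polynomial.X - Polynomial.C (C (x i))) := by
  simp only [Rpoly, map_mul, map_prod, map_sub, fse_X0, fse_C]

lemma fse_Rpoly1 : fse (Rpoly g a x 1) =
    Polynomial.C ((X 0 - C a) * ∏ i, (X 0 - C (x i)) : MvPolynomial (Fin 1) ℂ) := by
  simp only [Rpoly, map_mul, map_prod, map_sub, fse_X1, fse_C]

lemma lin1_ne (c : ℂ) : (X 0 - C c : MvPolynomial (Fin 1) ℂ) ≠ 0 :=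
  ne_zero_of_eval (fun _ => c + 1) (by simp)

lemma rho_ne : ((X 0 - C a) * ∏ i, (X 0 - C (x i)) : MvPolynomial (Fin 1) ℂ) ≠ 0 :=
  mul_ne_zero (lin1_ne a) (Finset.prod_ne_zero_iff.mpr fun i _ => lin1_ne (x i))

lemma fse_R0_ne : fse (Rpoly g a x 0) ≠ 0 := by
  rw [fse_Rpoly0]
  exact mul_ne_zero (Polynomial.X_sub_C_ne_zero _)
    (Finset.prod_ne_zero_iff.mpr fun i _ => Polynomial.X_sub_C_ne_zero _)

lemma fse_R1_ne : fse (Rpoly g a x 1) ≠ 0 := by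
  rw [fse_Rpoly1]
  exact Polynomial.C_ne_zero.mpr rho_ne

lemma natdeg_fse_R0 : (fse (Rpoly g a x 0)).natDegree = g + 1 := by
  rw [fse_Rpoly0, Polynomial.natDegree_mul (Polynomial.X_sub_C_ne_zero _)
    (Finset.prod_ne_zero_iff.mpr fun i _ => Polynomial.X_sub_C_ne_zero _),
    Polynomial.natDegree_X_sub_C,
    Polynomial.natDegree_prod _ _ (fun i _ => Polynomial.X_sub_C_ne_zero _)]
  simp [Polynomial.natDegree_X_sub_C]
  omega

lemma natdeg_fse_R1 : (fse (Rpoly g a x 1)).natDegree = 0 := by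
  rw [fse_Rpoly1, Polynomial.natDegree_C]

lemma natDegree_fse (p : MvPolynomial (Fin 2) ℂ) : (fse p).natDegree = degreeOf 0 p :=
  natDegree_finSuccEquiv p

end images

lemma prod_lin_dvd {ι : Type*} [DecidableEq ι] (c : ι → ℂ) (v : Fin 2)
    (F : MvPolynomial (Fin 2) ℂ) :
    ∀ s : Finset ι, (∀ i ∈ s, ∀ j ∈ s, i ≠ j → c i ≠ c j) →
      (∀ i ∈ s, (X v - C (c i)) ∣ F) → (∏ i ∈ s, (X v - C (c i))) ∣ F := by
  intro s
  induction s using Finset.induction_on with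
  | empty => intro _ _; simpa using one_dvd F
  | @insert b s hb ih =>
      intro hc h
      rw [Finset.prod_insert hb]
      refine IsRelPrime.mul_dvd ?_ (h b (Finset.mem_insert_self b s)) ?_
      · refine IsRelPrime.prod_right fun j hj => ?_
        exact relprime_X_sub_C_same v (hc b (Finset.mem_insert_self b s) j
          (Finset.mem_insert_of_mem hj) (fun hbj => hb (hbj ▸ hj)))
      · exact ih (fun i hi j hj hij =>
            hc i (Finset.mem_insert_of_mem hi) j (Finset.mem_insert_of_mem hj) hij)
          (fun i hi => h i (Finset.mem_insert_of_mem hi))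

/-- there is a symmetric polynomial `G(e₁,e₂)` of degree at most `g-1`
in each variable with `F(e₁,e₂) = (e₁-e₂)² R(e₁) R(e₂) G(e₁,e₂)`. -/
theorem stmt_5 (g : ℕ) (hg : 1 ≤ g) (ν : ℤ → ℂ) (hν0 : ν 0 ≠ 0) (hνm2 : ν (-2) = 0)
    (a : ℂ) (ha : Nfun g ν a = 0)
    (x y : Fin g → ℂ) (hxy : ∀ i, (y i)^2 = Nfun g ν (x i))
    (hx : Function.Injective x) (hxa : ∀ i, x i ≠ a) :
    ∃ G : MvPolynomial (Fin 2) ℂ,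
      MvPolynomial.rename ⇑(Equiv.swap (0 : Fin 2) 1) G = G ∧
      G.degreeOf 0 ≤ g - 1 ∧ G.degreeOf 1 ≤ g - 1 ∧
      Fpoly g ν a x y = (X 0 - X 1)^2 * Rpoly g a x 0 * Rpoly g a x 1 * G := by
  classical
  set F := Fpoly g ν a x y with hF
  have evF : ∀ s t : ℂ, eval ![s, t] F = Ffun g ν a x y s t :=
    fun s t => eval_Fpoly g ν a x y s t
  have hqne : (X 0 - X 1 : MvPolynomial (Fin 2) ℂ) ≠ 0 :=
    ne_zero_of_eval ![1, 0] (by simp)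
  -- symmetry of F
  have hFsym : sw F = F := by
    refine MvPolynomial.funext fun z => ?_
    have hz : z = ![z 0, z 1] := by funext v; fin_cases v <;> rfl
    rw [eval_sw, evF, Ffun_symm]
    conv_rhs => rw [hz]
    rw [evF]
  -- (X0 - X1)^2 divides F
  obtain ⟨H, hH⟩ : (X 0 - X 1 : MvPolynomial (Fin 2) ℂ) ∣ F :=
    dvd_X0_sub_X1 (fun t => by rw [evF]; exact Ffun_diag hνm2 t)
  have hHanti : H = -(sw H) := by
    have h3 : (X 0 - X 1) * H = (X 0 - X 1) * -(sw H) := by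
      calc (X 0 - X 1) * H = F := hH.symm
        _ = sw F := hFsym.symm
        _ = sw (X 0 - X 1) * sw H := by rw [hH, map_mul]
        _ = (X 1 - X 0) * sw H := by rw [map_sub, sw_X0, sw_X1]
        _ = (X 0 - X 1) * -(sw H) := by ring
    exact mul_left_cancel₀ hqne h3
  have hH_diag : ∀ t : ℂ, eval ![t, t] H = 0 := by
    intro t
    have h1 : eval ![t, t] (-(sw H)) = -(eval ![t, t] H) := by
      rw [map_neg, eval_sw]
      norm_num
    have h2 := congrArg (eval ![t, t]) hHanti
    rw [h1] at h2
    exact CharZero.neg_eq_self_iff.mp h2.symm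
  have hq2_dvd : (X 0 - X 1 : MvPolynomial (Fin 2) ℂ)^2 ∣ F := by
    obtain ⟨H2, hH2⟩ := dvd_X0_sub_X1 hH_diag
    exact ⟨H2, by rw [hH, hH2]; ring⟩
  -- linear divisibilities
  have hdvd0a : (X 0 - C a : MvPolynomial (Fin 2) ℂ) ∣ F :=
    dvd_X0_sub_C fun t => by rw [evF]; exact Ffun_a ha t
  have hdvd0x : ∀ k, (X 0 - C (x k) : MvPolynomial (Fin 2) ℂ) ∣ F :=
    fun k => dvd_X0_sub_C fun t => by rw [evF]; exact Ffun_x hx hxa hxy k t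
  have hdvd1a : (X 1 - C a : MvPolynomial (Fin 2) ℂ) ∣ F :=
    dvd_X1_sub_C fun t => by rw [evF, Ffun_symm]; exact Ffun_a ha t
  have hdvd1x : ∀ k, (X 1 - C (x k) : MvPolynomial (Fin 2) ℂ) ∣ F :=
    fun k => dvd_X1_sub_C fun t => by rw [evF, Ffun_symm]; exact Ffun_x hx hxa hxy k t
  have hxdist : ∀ i ∈ (Finset.univ : Finset (Fin g)), ∀ j ∈ (Finset.univ : Finset (Fin g)),
      i ≠ j → x i ≠ x j := fun i _ j _ hij hc => hij (hx hc)
  have hR0_dvd : Rpoly g a x 0 ∣ F := by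
    rw [Rpoly]
    refine IsRelPrime.mul_dvd ?_ hdvd0a ?_
    · exact IsRelPrime.prod_right fun i _ => relprime_X_sub_C_same 0 (Ne.symm (hxa i))
    · exact prod_lin_dvd x 0 F Finset.univ hxdist (fun i _ => hdvd0x i)
  have hR1_dvd : Rpoly g a x 1 ∣ F := by
    rw [Rpoly]
    refine IsRelPrime.mul_dvd ?_ hdvd1a ?_
    · exact IsRelPrime.prod_right fun i _ => relprime_X_sub_C_same 1 (Ne.symm (hxa i))
    · exact prod_lin_dvd x 1 F Finset.univ hxdist (fun i _ => hdvd1x i)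
  -- relative primality
  have relq0 : ∀ c : ℂ, IsRelPrime (X 0 - X 1 : MvPolynomial (Fin 2) ℂ) (X 0 - C c) := fun c =>
    relprime_of_prime_not_dvd prime_X0_sub_X1 (not_dvd_of_eval ![c+1, c+1] (by simp) (by simp))
  have relq1 : ∀ c : ℂ, IsRelPrime (X 0 - X 1 : MvPolynomial (Fin 2) ℂ) (X 1 - C c) := fun c =>
    relprime_of_prime_not_dvd prime_X0_sub_X1 (not_dvd_of_eval ![c+1, c+1] (by simp) (by simp))
  have rel01 : ∀ c c' : ℂ, IsRelPrime (X 0 - C c : MvPolynomial (Fin 2) ℂ) (X 1 - C c') :=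
    fun c c' => relprime_of_prime_not_dvd (prime_X0_sub_C c)
      (not_dvd_of_eval ![c, c'+1] (by simp) (by simp))
  have relq_R0 : IsRelPrime ((X 0 - X 1 : MvPolynomial (Fin 2) ℂ)^2) (Rpoly g a x 0) := by
    refine IsRelPrime.pow_left ?_
    rw [Rpoly]
    exact (relq0 a).mul_right (IsRelPrime.prod_right fun i _ => relq0 (x i))
  have relq_R1 : IsRelPrime ((X 0 - X 1 : MvPolynomial (Fin 2) ℂ)^2) (Rpoly g a x 1) := by
    refine IsRelPrime.pow_left ?_
    rw [Rpoly]
    exact (relq1 a).mul_right (IsRelPrime.prod_right fun i _ => relq1 (x i))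
  have relR0R1 : IsRelPrime (Rpoly g a x 0) (Rpoly g a x 1) := by
    rw [Rpoly, Rpoly]
    refine IsRelPrime.mul_left ?_ ?_
    · exact (rel01 a a).mul_right (IsRelPrime.prod_right fun i _ => rel01 a (x i))
    · refine IsRelPrime.prod_left fun i _ => ?_
      exact (rel01 (x i) a).mul_right (IsRelPrime.prod_right fun j _ => rel01 (x i) (x j))
  obtain ⟨G, hG⟩ : ((X 0 - X 1)^2 * Rpoly g a x 0 * Rpoly g a x 1) ∣ F :=
    IsRelPrime.mul_dvd (relq_R1.mul_left relR0R1)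
      (IsRelPrime.mul_dvd relq_R0 hq2_dvd hR0_dvd) hR1_dvd
  -- nonzeroness
  have hR0ne : Rpoly g a x 0 ≠ 0 := fun h0 => fse_R0_ne (by rw [h0, map_zero])
  have hR1ne : Rpoly g a x 1 ≠ 0 := fun h0 => fse_R1_ne (by rw [h0, map_zero])
  have hDne : ((X 0 - X 1 : MvPolynomial (Fin 2) ℂ)^2 * Rpoly g a x 0 * Rpoly g a x 1) ≠ 0 :=
    mul_ne_zero (mul_ne_zero (pow_ne_zero 2 hqne) hR0ne) hR1ne
  -- symmetry of G
  have hswR0 : sw (Rpoly g a x 0) = Rpoly g a x 1 := by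
    simp only [Rpoly, map_mul, map_prod, map_sub, sw_X0, sw_C]
  have hswR1 : sw (Rpoly g a x 1) = Rpoly g a x 0 := by
    simp only [Rpoly, map_mul, map_prod, map_sub, sw_X1, sw_C]
  have hGsym : sw G = G := by
    have h1 : ((X 0 - X 1)^2 * Rpoly g a x 0 * Rpoly g a x 1) * G
        = ((X 0 - X 1)^2 * Rpoly g a x 0 * Rpoly g a x 1) * sw G := by
      calc ((X 0 - X 1)^2 * Rpoly g a x 0 * Rpoly g a x 1) * G = F := hG.symm
        _ = sw F := hFsym.symm
        _ = sw ((X 0 - X 1)^2) * sw (Rpoly g a x 0) * sw (Rpoly g a x 1) * sw G := by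
            rw [hG, map_mul, map_mul, map_mul]
        _ = (X 1 - X 0)^2 * Rpoly g a x 1 * Rpoly g a x 0 * sw G := by
            rw [map_pow, map_sub, sw_X0, sw_X1, hswR0, hswR1]
        _ = ((X 0 - X 1)^2 * Rpoly g a x 0 * Rpoly g a x 1) * sw G := by ring
    exact (mul_left_cancel₀ hDne h1).symm
  have hGsym' : MvPolynomial.rename ⇑(Equiv.swap (0 : Fin 2) 1) G = G := by
    rw [← renameEquiv_apply]; exact hGsym
  -- degrees
  by_cases hG0 : G = 0
  · refine ⟨0, by simp, by simp, by simp, ?_⟩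
    rw [hG, hG0]
  · have hfseG : fse G ≠ 0 := fun h0 => hG0 (by simpa using congrArg fse.symm h0)
    have hfseD : fse ((X 0 - X 1 : MvPolynomial (Fin 2) ℂ)^2
        * Rpoly g a x 0 * Rpoly g a x 1) ≠ 0 := fun h0 => hDne (by simpa using congrArg fse.symm h0)
    have hnd : (fse F).natDegree
        = (fse ((X 0 - X 1)^2 * Rpoly g a x 0 * Rpoly g a x 1)).natDegree
          + (fse G).natDegree := by
      rw [hG, map_mul, Polynomial.natDegree_mul hfseD hfseG]
    have hndD : (fse ((X 0 - X 1 : MvPolynomial (Fin 2) ℂ)^2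
        * Rpoly g a x 0 * Rpoly g a x 1)).natDegree = g + 3 := by
      have hpowne : (fse (X 0 - X 1 : MvPolynomial (Fin 2) ℂ))^2 ≠ 0 := by
        rw [fse_q]; exact pow_ne_zero _ (Polynomial.X_sub_C_ne_zero _)
      rw [map_mul, map_mul, map_pow,
        Polynomial.natDegree_mul (mul_ne_zero hpowne fse_R0_ne) fse_R1_ne,
        Polynomial.natDegree_mul hpowne fse_R0_ne,
        Polynomial.natDegree_pow, fse_q, Polynomial.natDegree_X_sub_C,
        natdeg_fse_R0, natdeg_fse_R1]
      omega
    have hdF : (fse F).natDegree ≤ 2*g + 2 := by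
      rw [natDegree_fse]; exact deg0_Fpoly hνm2
    have hdG : degreeOf 0 G ≤ g - 1 := by
      rw [← natDegree_fse]; omega
    have hdG1 : degreeOf 1 G ≤ g - 1 := by
      have h2 : degreeOf ((Equiv.swap (0 : Fin 2) 1) 1)
          (rename (⇑(Equiv.swap (0 : Fin 2) 1)) G) = degreeOf 1 G :=
        degreeOf_rename_of_injective (Equiv.injective _) 1
      rw [Equiv.swap_apply_right, hGsym'] at h2
      omega
    exact ⟨G, hGsym', hdG, hdG1, hG⟩
end

section
/- Let g ≥ 1 be an integer, ν_0 ∈ ℂ∖{0}, a, a_1, …, a_{2g+1} ∈ ℂ with a ≠ a_i for all i, and N(x) = ν_0(x−a)∏_{i=1}^{2g+1}(x−a_i). Let s, t ∈ ℂ with s·t ≠ 0 and s^{2g+1}/t² = N'(a), and set M̃(X) = ∏_{i=1}^{2g+1}(X − s/(a_i−a)). If (x,y) ∈ ℂ² satisfies y² = N(x) and x ≠ a, then the point (X,Y) = (s/(x−a), t·y/(x−a)^{g+1}) satisfies Y² = M̃(X). -/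
/-- the map `(x,y) ↦ (s/(x-a), t·y/(x-a)^{g+1})` sends points of
`y² = N(x)` (with `x ≠ a`) to points of `Y² = M̃(X)`. -/
theorem stmt_7 (g : ℕ) (hg : 1 ≤ g) (ν0 : ℂ) (hν0 : ν0 ≠ 0)
    (a : ℂ) (A : Fin (2*g+1) → ℂ) (hA : ∀ i, a ≠ A i)
    (N : ℂ → ℂ) (hN : N = fun x => ν0 * (x - a) * ∏ i, (x - A i))
    (s t : ℂ) (hst : s * t ≠ 0) (h : s^(2*g+1) / t^2 = deriv N a)
    (M : ℂ → ℂ) (hM : M = fun X => ∏ i, (X - s/(A i - a))) :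
    ∀ x y : ℂ, y^2 = N x → x ≠ a → (t * y / (x-a)^(g+1))^2 = M (s/(x-a)) := by
  intro x y hy hxa
  have hs : s ≠ 0 := fun hh => hst (by simp [hh])
  have ht : t ≠ 0 := fun hh => hst (by simp [hh])
  have hxa' : x - a ≠ 0 := sub_ne_zero.mpr hxa
  have hAa : ∀ i, A i - a ≠ 0 := fun i => sub_ne_zero.mpr fun hh => hA i hh.symm
  have haA : ∀ i, a - A i ≠ 0 := fun i => sub_ne_zero.mpr (hA i)
  -- derivative computation
  have hderiv : deriv N a = ν0 * ∏ i, (a - A i) := by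
    have hP : Differentiable ℂ (fun x : ℂ => ν0 * ∏ i, (x - A i)) := by
      apply Differentiable.const_mul
      apply Differentiable.fun_finsetProd
      intro i _
      exact (differentiable_id.sub_const (A i))
    have h1 : HasDerivAt (fun x : ℂ => x - a) 1 a := (hasDerivAt_id a).sub_const a
    have h4 := h1.fun_mul (hP a).hasDerivAt
    have hNe : N = fun x : ℂ => (x - a) * (ν0 * ∏ i, (x - A i)) := by
      rw [hN]; funext z; ring
    rw [hNe, h4.deriv]
    simp
  have key : s ^ (2*g+1) = t^2 * (ν0 * ∏ i, (a - A i)) := by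
    rw [hderiv] at h
    field_simp at h
    rw [h]; ring
  rw [hM]
  have hfac : ∀ i : Fin (2*g+1), s/(x-a) - s/(A i - a)
      = (s * (A i - x)) / ((x-a) * (A i - a)) := by
    intro i
    rw [div_sub_div _ _ hxa' (hAa i)]
    congr 1; ring
  calc (t * y / (x-a)^(g+1))^2
      = t^2 * y^2 / (x-a)^(2*g+2) := by
        rw [div_pow, mul_pow, ← pow_mul]
        ring_nf
    _ = ∏ i, ((s * (A i - x)) / ((x-a) * (A i - a))) := by
        rw [Finset.prod_div_distrib, Finset.prod_mul_distrib, Finset.prod_mul_distrib,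
          Finset.prod_const, Finset.prod_const, Finset.card_univ, Fintype.card_fin]
        have hAx : ∏ i, (A i - x) = (-1:ℂ)^(2*g+1) * ∏ i, (x - A i) := by
          have e : ∏ i, (A i - x) = ∏ i, ((-1:ℂ) * (x - A i)) :=
            Finset.prod_congr rfl (fun i _ => by ring)
          rw [e, Finset.prod_mul_distrib, Finset.prod_const, Finset.card_univ,
            Fintype.card_fin]
        have hAa' : ∏ i, (A i - a) = (-1:ℂ)^(2*g+1) * ∏ i, (a - A i) := by
          have e : ∏ i, (A i - a) = ∏ i, ((-1:ℂ) * (a - A i)) :=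
            Finset.prod_congr rfl (fun i _ => by ring)
          rw [e, Finset.prod_mul_distrib, Finset.prod_const, Finset.card_univ,
            Fintype.card_fin]
        rw [hAx, hAa', hy, hN]
        have hne : (∏ i, (a - A i)) ≠ 0 := Finset.prod_ne_zero_iff.mpr fun i _ => haA i
        field_simp
        rw [key]
        ring
    _ = ∏ i, (s/(x-a) - s/(A i - a)) := by
        exact (Finset.prod_congr rfl fun i _ => (hfac i).symm)
end

section
/- Let g ≥ 1 be an integer, ν_0 ∈ ℂ∖{0}, a, a_1, …, a_{2g+1} ∈ ℂ with a ≠ a_i for all i, and N(x) = ν_0(x−a)∏_{i=1}^{2g+1}(x−a_i). Let s, t ∈ ℂ with s·t ≠ 0 and s^{2g+1}/t² = N'(a), and set M̃(X) = ∏_{i=1}^{2g+1}(X − s/(a_i−a)). Then for every x ∈ ℂ with x ≠ a one has (x−a)^{2g+2} · M̃(s/(x−a)) = t² · N(x). -/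
/-- `(x-a)^{2g+2} · M̃(s/(x-a)) = t² · N(x)` for all `x ≠ a`. -/
theorem stmt_8 (g : ℕ) (hg : 1 ≤ g) (ν0 : ℂ) (hν0 : ν0 ≠ 0)
    (a : ℂ) (A : Fin (2*g+1) → ℂ) (hA : ∀ i, a ≠ A i)
    (N : ℂ → ℂ) (hN : N = fun x => ν0 * (x - a) * ∏ i, (x - A i))
    (s t : ℂ) (hst : s * t ≠ 0) (h : s^(2*g+1) / t^2 = deriv N a)
    (M : ℂ → ℂ) (hM : M = fun X => ∏ i, (X - s/(A i - a))) :
    ∀ x : ℂ, x ≠ a → (x-a)^(2*g+2) * M (s/(x-a)) = t^2 * N x := by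
  intro x hx
  have hdx : x - a ≠ 0 := sub_ne_zero.mpr hx
  have hc : ∀ i, A i - a ≠ 0 := fun i => sub_ne_zero.mpr fun he => hA i he.symm
  have ht : t ≠ 0 := right_ne_zero_of_mul hst
  have hpa : (∏ i, (a - A i)) ≠ 0 :=
    Finset.prod_ne_zero_iff.mpr fun i _ => sub_ne_zero.mpr (hA i)
  -- derivative of N at a
  have hder : deriv N a = ν0 * ∏ i, (a - A i) := by
    set P : ℂ → ℂ := fun x => ∏ i, (x - A i) with hPdef
    have hP : DifferentiableAt ℂ P a := by
      apply DifferentiableAt.fun_finsetProd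
      intro i _
      exact differentiableAt_id.sub_const (A i)
    have h1 : HasDerivAt (fun x : ℂ => ν0 * (x - a)) ν0 a := by
      simpa using ((hasDerivAt_id a).sub_const a).const_mul ν0
    have h2 := hP.hasDerivAt
    have h3 := h1.mul h2
    have h4 := h3.deriv
    rw [hN]
    simpa [hPdef, Pi.mul_def] using h4
  -- key value of s^(2g+1)
  have hs : s^(2*g+1) = t^2 * (ν0 * ∏ i, (a - A i)) := by
    have := h
    field_simp at this
    rw [this, hder]
  -- rewrite M at the point
  have key : (∏ i, (s/(x-a) - s/(A i - a)))
      = (s^(2*g+1) * ∏ i, (A i - x)) / ((x-a)^(2*g+1) * ∏ i, (A i - a)) := by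
    have h1 : ∀ i : Fin (2*g+1), s/(x-a) - s/(A i - a)
        = (s * (A i - x)) / ((x-a) * (A i - a)) := by
      intro i
      rw [div_sub_div _ _ hdx (hc i)]
      rw [show s * (A i - a) - (x - a) * s = s * (A i - x) by ring]
    rw [Finset.prod_congr rfl fun i _ => h1 i, Finset.prod_div_distrib,
      Finset.prod_mul_distrib, Finset.prod_mul_distrib,
      Finset.prod_const, Finset.prod_const]
    simp [Finset.card_fin]
  have hprodneg : (∏ i, (A i - x)) = (-1)^(2*g+1) * ∏ i, (x - A i) := by
    simp_rw [show ∀ i : Fin (2*g+1), A i - x = (-1) * (x - A i) from fun i => by ring,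
      Finset.prod_mul_distrib, Finset.prod_const, Finset.card_fin]
  have hprodneg2 : (∏ i, (A i - a)) = (-1)^(2*g+1) * ∏ i, (a - A i) := by
    simp_rw [show ∀ i : Fin (2*g+1), A i - a = (-1) * (a - A i) from fun i => by ring,
      Finset.prod_mul_distrib, Finset.prod_const, Finset.card_fin]
  rw [hM, hN]
  simp only []
  rw [key, hprodneg, hprodneg2, hs]
  have hneg : ((-1:ℂ))^(2*g+1) = -1 := Odd.neg_one_pow ⟨g, by ring⟩
  rw [hneg]
  have hdxp : (x-a)^(2*g+1) ≠ 0 := pow_ne_zero _ hdx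
  field_simp
  ring
end

section
/- Let g ≥ 2 be an integer, λ_2, λ_4 ∈ ℂ, and W : ℂ^g → ℂ an entire (complex-analytic) function of the variables (u_1, u_3, …, u_{2g−1}). Define ℘_{i_1,…,i_k} = −∂_{u_{i_1}}⋯∂_{u_{i_k}} W for indices i_j ∈ {1,3,…,2g−1}. Assume that identically on ℂ^g: ℘_{1,1,1,1} = 6℘_{1,1}² + 4λ_2℘_{1,1} + 4℘_{1,3} + 2λ_4. Fix μ ∈ ℂ with μ² = λ_2 and constants ϱ_3, …, ϱ_g ∈ ℂ. Then the function Υ(t_1,t_2,t_3) := −2·℘_{1,1}(t_1 + 2μ·t_2, −4t_3, ϱ_3, …, ϱ_g) (the arguments being substituted for (u_1, u_3, u_5, …, u_{2g−1}) in that order) satisfies the KP-I equation ∂_{t_1}(∂_{t_3}Υ + 6Υ·∂_{t_1}Υ + ∂_{t_1}³Υ) = ∂_{t_2}²Υ identically on ℂ³. -/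
/-- Partial derivative in the `j`-th coordinate direction. -/
noncomputable def pd {n : ℕ} (j : Fin n) (F : (Fin n → ℂ) → ℂ) : (Fin n → ℂ) → ℂ :=
  fun t => deriv (fun z => F (Function.update t j z)) (t j)

/-- `Φ(t₁,t₂,t₃)` satisfies the KP-I equation
`∂_{t₁}(∂_{t₃}Φ + 6Φ∂_{t₁}Φ + ∂_{t₁}³Φ) = ∂_{t₂}²Φ`. -/
def IsKPI (Φ : (Fin 3 → ℂ) → ℂ) : Prop :=
  ∀ t, pd 0 (fun s => pd 2 Φ s + 6 * Φ s * pd 0 Φ s + pd 0 (pd 0 (pd 0 Φ)) s) t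
      = pd 1 (pd 1 Φ) t

/-- `Φ(t₁,t₂,t₃)` satisfies the KP-II equation
`∂_{t₁}(∂_{t₃}Φ + 6Φ∂_{t₁}Φ + ∂_{t₁}³Φ) = -∂_{t₂}²Φ`. -/
def IsKPII (Φ : (Fin 3 → ℂ) → ℂ) : Prop :=
  ∀ t, pd 0 (fun s => pd 2 Φ s + 6 * Φ s * pd 0 Φ s + pd 0 (pd 0 (pd 0 Φ)) s) t
      = -(pd 1 (pd 1 Φ) t)

namespace KPaux

variable {n : ℕ}

lemma slice_diff {F : (Fin n → ℂ) → ℂ} (hF : AnalyticOnNhd ℂ F Set.univ)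
    (t : Fin n → ℂ) (j : Fin n) (z : ℂ) :
    DifferentiableAt ℂ (fun w => F (Function.update t j w)) z :=
  ((hF _ trivial).differentiableAt).comp z (hasDerivAt_update t j z).differentiableAt

lemma pd_eq_fderiv {F : (Fin n → ℂ) → ℂ} {t : Fin n → ℂ} (j : Fin n)
    (hF : DifferentiableAt ℂ F t) :
    pd j F t = fderiv ℂ F t (Pi.single j 1) := by
  have hu : Function.update t j (t j) = t := Function.update_eq_self j t
  have hF' : HasFDerivAt F (fderiv ℂ F t) (Function.update t j (t j)) := by
    rw [hu]; exact hF.hasFDerivAt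
  have h := hF'.comp_hasDerivAt (t j) (hasDerivAt_update t j (t j))
  exact h.deriv

lemma pd_entire {F : (Fin n → ℂ) → ℂ} (j : Fin n) (hF : AnalyticOnNhd ℂ F Set.univ) :
    AnalyticOnNhd ℂ (pd j F) Set.univ := by
  have h : pd j F = fun t =>
      (ContinuousLinearMap.apply ℂ ℂ (Pi.single j (1:ℂ))) (fderiv ℂ F t) :=
    funext fun t => pd_eq_fderiv j (hF t trivial).differentiableAt
  rw [h]
  exact (ContinuousLinearMap.apply ℂ ℂ (Pi.single j (1:ℂ))).comp_analyticOnNhd hF.fderiv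

lemma pd_comm {F : (Fin n → ℂ) → ℂ} (i j : Fin n) (hF : AnalyticOnNhd ℂ F Set.univ) :
    pd i (pd j F) = pd j (pd i F) := by
  funext t
  have hdF : ∀ x, DifferentiableAt ℂ F x := fun x => (hF x trivial).differentiableAt
  have hF' : AnalyticOnNhd ℂ (fderiv ℂ F) Set.univ := hF.fderiv
  have hd2 : DifferentiableAt ℂ (fderiv ℂ F) t := (hF' t trivial).differentiableAt
  have key : ∀ v w : Fin n → ℂ,
      fderiv ℂ (fun x => fderiv ℂ F x w) t v = fderiv ℂ (fderiv ℂ F) t v w := by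
    intro v w
    have h := hd2.hasFDerivAt.clm_apply (hasFDerivAt_const w t)
    rw [h.fderiv]
    simp
  have hsymm : ∀ v w, fderiv ℂ (fderiv ℂ F) t v w = fderiv ℂ (fderiv ℂ F) t w v :=
    fun v w => second_derivative_symmetric (fun y => (hdF y).hasFDerivAt) hd2.hasFDerivAt v w
  have hdiff : ∀ (w : Fin n → ℂ) x, DifferentiableAt ℂ (fun y => fderiv ℂ F y w) x :=
    fun w x => ((hF' x trivial).differentiableAt).clm_apply (differentiableAt_const w)
  have hpd : ∀ k : Fin n, pd k F = fun x => fderiv ℂ F x (Pi.single k 1) :=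
    fun k => funext fun x => pd_eq_fderiv k (hdF x)
  rw [hpd j, hpd i, pd_eq_fderiv i (hdiff _ t), pd_eq_fderiv j (hdiff _ t), key, key]
  exact hsymm _ _

lemma pd_neg {F : (Fin n → ℂ) → ℂ} (j : Fin n) :
    pd j (fun x => -(F x)) = fun t => -(pd j F t) := by
  funext t
  simp only [pd]
  exact deriv.neg

lemma pd_const_mul (c : ℂ) {F : (Fin n → ℂ) → ℂ} (j : Fin n) (t : Fin n → ℂ) :
    pd j (fun x => c * F x) t = c * pd j F t := by
  simp only [pd]
  exact deriv_const_mul_field c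

lemma pd_const (c : ℂ) (j : Fin n) (t : Fin n → ℂ) :
    pd j (fun _ => c) t = 0 := by
  simp only [pd]
  exact deriv_const _ c

lemma pd_add {F G : (Fin n → ℂ) → ℂ} (j : Fin n) (t : Fin n → ℂ)
    (hF : AnalyticOnNhd ℂ F Set.univ) (hG : AnalyticOnNhd ℂ G Set.univ) :
    pd j (fun x => F x + G x) t = pd j F t + pd j G t := by
  simp only [pd]
  exact deriv_add (slice_diff hF t j (t j)) (slice_diff hG t j (t j))

lemma pd_mul {F G : (Fin n → ℂ) → ℂ} (j : Fin n) (t : Fin n → ℂ)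
    (hF : AnalyticOnNhd ℂ F Set.univ) (hG : AnalyticOnNhd ℂ G Set.univ) :
    pd j (fun x => F x * G x) t = pd j F t * G t + F t * pd j G t := by
  simp only [pd]
  rw [deriv_fun_mul (slice_diff hF t j (t j)) (slice_diff hG t j (t j))]
  rw [Function.update_eq_self]

noncomputable def phi (g : ℕ) (μ : ℂ) (ϱ : ℕ → ℂ) (t : Fin 3 → ℂ) : Fin g → ℂ :=
  fun k => if (k:ℕ) = 0 then t 0 + 2*μ*t 1 else if (k:ℕ) = 1 then -4 * t 2 else ϱ ((k:ℕ)+1)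

variable {g : ℕ} {μ : ℂ} {ϱ : ℕ → ℂ}

lemma phi_u0 {u0 : Fin g} (hu0 : (u0:ℕ) = 0) (t : Fin 3 → ℂ) :
    phi g μ ϱ t u0 = t 0 + 2*μ*t 1 := by simp [phi, hu0]

lemma phi_u1 {u1 : Fin g} (hu1 : (u1:ℕ) = 1) (t : Fin 3 → ℂ) :
    phi g μ ϱ t u1 = -4 * t 2 := by simp [phi, hu1]

lemma upd0 (u0 : Fin g) (hu0 : (u0:ℕ) = 0) (t : Fin 3 → ℂ) (z : ℂ) :
    phi g μ ϱ (Function.update t 0 z) = Function.update (phi g μ ϱ t) u0 (z + 2*μ*t 1) := by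
  funext k
  simp only [phi, Function.update_apply, Fin.ext_iff, hu0,
    show ((0:Fin 3):ℕ) = 0 from rfl, show ((1:Fin 3):ℕ) = 1 from rfl,
    show ((2:Fin 3):ℕ) = 2 from rfl]
  by_cases h0 : (k:ℕ) = 0 <;> by_cases h1 : (k:ℕ) = 1 <;> simp_all

lemma upd1 (u0 : Fin g) (hu0 : (u0:ℕ) = 0) (t : Fin 3 → ℂ) (z : ℂ) :
    phi g μ ϱ (Function.update t 1 z) = Function.update (phi g μ ϱ t) u0 (t 0 + 2*μ*z) := by
  funext k
  simp only [phi, Function.update_apply, Fin.ext_iff, hu0,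
    show ((0:Fin 3):ℕ) = 0 from rfl, show ((1:Fin 3):ℕ) = 1 from rfl,
    show ((2:Fin 3):ℕ) = 2 from rfl]
  by_cases h0 : (k:ℕ) = 0 <;> by_cases h1 : (k:ℕ) = 1 <;> simp_all

lemma upd2 (u1 : Fin g) (hu1 : (u1:ℕ) = 1) (t : Fin 3 → ℂ) (z : ℂ) :
    phi g μ ϱ (Function.update t 2 z) = Function.update (phi g μ ϱ t) u1 (-4 * z) := by
  funext k
  simp only [phi, Function.update_apply, Fin.ext_iff, hu1,
    show ((0:Fin 3):ℕ) = 0 from rfl, show ((1:Fin 3):ℕ) = 1 from rfl,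
    show ((2:Fin 3):ℕ) = 2 from rfl]
  by_cases h0 : (k:ℕ) = 0 <;> by_cases h1 : (k:ℕ) = 1 <;> simp_all

lemma chain0 (u0 : Fin g) (hu0 : (u0:ℕ) = 0)
    (H : (Fin g → ℂ) → ℂ) (t : Fin 3 → ℂ) :
    pd 0 (fun s => H (phi g μ ϱ s)) t = pd u0 H (phi g μ ϱ t) := by
  simp only [pd]
  simp only [upd0 u0 hu0 t]
  rw [deriv_comp_add_const (f := fun w => H (Function.update (phi g μ ϱ t) u0 w))
      (a := 2*μ*t 1)]
  rw [phi_u0 hu0]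

lemma chain1 (u0 : Fin g) (hu0 : (u0:ℕ) = 0)
    {H : (Fin g → ℂ) → ℂ} (hH : AnalyticOnNhd ℂ H Set.univ) (t : Fin 3 → ℂ) :
    pd 1 (fun s => H (phi g μ ϱ s)) t = 2*μ * pd u0 H (phi g μ ϱ t) := by
  simp only [pd]
  simp only [upd1 u0 hu0 t]
  have hG := (slice_diff hH (phi g μ ϱ t) u0 (t 0 + 2*μ*t 1)).hasDerivAt
  have hinner : HasDerivAt (fun z : ℂ => t 0 + 2*μ*z) (2*μ) (t 1) := by
    simpa using ((hasDerivAt_id (t 1)).const_mul (2*μ)).const_add (t 0)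
  have h2 := hG.comp (t 1) hinner
  have h3 : deriv (fun z => H (Function.update (phi g μ ϱ t) u0 (t 0 + 2*μ*z))) (t 1)
      = deriv (fun w => H (Function.update (phi g μ ϱ t) u0 w)) (t 0 + 2*μ*t 1) * (2*μ) :=
    h2.deriv
  rw [h3, phi_u0 hu0]
  ring

lemma chain2 (u1 : Fin g) (hu1 : (u1:ℕ) = 1)
    {H : (Fin g → ℂ) → ℂ} (hH : AnalyticOnNhd ℂ H Set.univ) (t : Fin 3 → ℂ) :
    pd 2 (fun s => H (phi g μ ϱ s)) t = -4 * pd u1 H (phi g μ ϱ t) := by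
  simp only [pd]
  simp only [upd2 u1 hu1 t]
  have hG := (slice_diff hH (phi g μ ϱ t) u1 (-4 * t 2)).hasDerivAt
  have hinner : HasDerivAt (fun z : ℂ => -4*z) (-4 : ℂ) (t 2) := by
    simpa using (hasDerivAt_id (t 2)).const_mul (-4 : ℂ)
  have h2 := hG.comp (t 2) hinner
  have h3 : deriv (fun z => H (Function.update (phi g μ ϱ t) u1 (-4*z))) (t 2)
      = deriv (fun w => H (Function.update (phi g μ ϱ t) u1 w)) (-4 * t 2) * (-4) :=
    h2.deriv
  rw [h3, phi_u1 hu1]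
  ring

end KPaux

open KPaux in
/-- for an entire `W : ℂ^g → ℂ` (coordinates `u₁,u₃,…,u_{2g-1}`) whose
functions `℘ = -∂∂ log`-type derivatives satisfy
`℘₁₁₁₁ = 6℘₁₁² + 4λ₂℘₁₁ + 4℘₁₃ + 2λ₄`, and `μ² = λ₂`, the function
`Υ(t₁,t₂,t₃) = -2℘₁₁(t₁+2μt₂, -4t₃, ϱ₃,…,ϱ_g)` solves KP-I. -/
theorem stmt_12 (g : ℕ) (hg : 2 ≤ g) (lam2 lam4 : ℂ)
    (W : (Fin g → ℂ) → ℂ) (hW : AnalyticOnNhd ℂ W Set.univ)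
    (P11 P13 P1111 : (Fin g → ℂ) → ℂ)
    (hP11 : P11 = fun u => -(pd ⟨0, by omega⟩ (pd ⟨0, by omega⟩ W) u))
    (hP13 : P13 = fun u => -(pd ⟨0, by omega⟩ (pd ⟨1, by omega⟩ W) u))
    (hP1111 : P1111 = fun u =>
      -(pd ⟨0, by omega⟩ (pd ⟨0, by omega⟩ (pd ⟨0, by omega⟩ (pd ⟨0, by omega⟩ W))) u))
    (hrel : ∀ u, P1111 u = 6 * (P11 u)^2 + 4 * lam2 * P11 u + 4 * P13 u + 2 * lam4)
    (μ : ℂ) (hμ : μ^2 = lam2) (ϱ : ℕ → ℂ) :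
    IsKPI (fun t => -2 * P11 (fun k =>
      if (k:ℕ) = 0 then t 0 + 2*μ*t 1
      else if (k:ℕ) = 1 then -4 * t 2
      else ϱ ((k:ℕ)+1))) := by
  have hg0 : 0 < g := by omega
  have hg1 : 1 < g := by omega
  set u0 : Fin g := ⟨0, hg0⟩ with hu0def
  set u1 : Fin g := ⟨1, hg1⟩ with hu1def
  have hu0 : (u0:ℕ) = 0 := rfl
  have hu1 : (u1:ℕ) = 1 := rfl
  have hP11' : P11 = fun u => -(pd u0 (pd u0 W) u) := hP11
  have hP13' : P13 = fun u => -(pd u0 (pd u1 W) u) := hP13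
  have hP1111' : P1111 = fun u => -(pd u0 (pd u0 (pd u0 (pd u0 W))) u) := hP1111
  -- analyticity facts
  have hP11a : AnalyticOnNhd ℂ P11 Set.univ := by
    rw [hP11']; exact AnalyticOnNhd.neg (pd_entire u0 (pd_entire u0 hW))
  have hP13a : AnalyticOnNhd ℂ P13 Set.univ := by
    rw [hP13']; exact AnalyticOnNhd.neg (pd_entire u0 (pd_entire u1 hW))
  have hQa : AnalyticOnNhd ℂ (pd u0 P11) Set.univ := pd_entire u0 hP11a
  have hBa : AnalyticOnNhd ℂ (pd u0 (pd u0 P11)) Set.univ := pd_entire u0 hQa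
  have hCa : AnalyticOnNhd ℂ (pd u0 (pd u0 (pd u0 P11))) Set.univ := pd_entire u0 hBa
  have hRa : AnalyticOnNhd ℂ (pd u0 P13) Set.univ := pd_entire u0 hP13a
  have hH2a : AnalyticOnNhd ℂ (fun u => -2 * P11 u) Set.univ :=
    analyticOnNhd_const.mul hP11a
  have hAa2 : AnalyticOnNhd ℂ (fun u => -2 * pd u0 P11 u) Set.univ :=
    analyticOnNhd_const.mul hQa
  -- ℘₁₁₁₁ = ∂₁∂₁℘₁₁
  have hB : pd u0 (pd u0 P11) = P1111 := by
    rw [hP11', pd_neg u0, pd_neg u0, hP1111']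
  -- ∂₃℘₁₁ = ∂₁℘₁₃  (mixed partials commute)
  have hS : pd u1 P11 = pd u0 P13 := by
    rw [hP11', hP13', pd_neg u1, pd_neg u0,
      pd_comm u1 u0 (pd_entire u0 hW), pd_comm u1 u0 hW]
  -- differentiating the assumed relation once
  have hBfun : pd u0 (pd u0 P11)
      = fun v => 6 * (P11 v * P11 v) + 4 * lam2 * P11 v + 4 * P13 v + 2 * lam4 := by
    rw [hB]; funext v; rw [hrel v]; ring
  have q1 : AnalyticOnNhd ℂ (fun v => 6 * (P11 v * P11 v)) Set.univ :=
    analyticOnNhd_const.mul (hP11a.mul hP11a)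
  have q2 : AnalyticOnNhd ℂ (fun v => 4 * lam2 * P11 v) Set.univ :=
    analyticOnNhd_const.mul hP11a
  have q3 : AnalyticOnNhd ℂ (fun v => 4 * P13 v) Set.univ :=
    analyticOnNhd_const.mul hP13a
  have q12 : AnalyticOnNhd ℂ (fun v => 6 * (P11 v * P11 v) + 4 * lam2 * P11 v) Set.univ :=
    q1.add q2
  have q123 : AnalyticOnNhd ℂ
      (fun v => 6 * (P11 v * P11 v) + 4 * lam2 * P11 v + 4 * P13 v) Set.univ :=
    q12.add q3
  have q4 : AnalyticOnNhd ℂ (fun _ : Fin g → ℂ => 2 * lam4) Set.univ := analyticOnNhd_const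
  have hCfun : pd u0 (pd u0 (pd u0 P11))
      = fun v => 6 * (pd u0 P11 v * P11 v + P11 v * pd u0 P11 v)
        + 4 * lam2 * pd u0 P11 v + 4 * pd u0 P13 v := by
    rw [hBfun]; funext v
    rw [pd_add u0 v q123 q4, pd_add u0 v q12 q3, pd_add u0 v q1 q2,
      pd_const (2*lam4) u0 v, pd_const_mul 6 u0 v, pd_mul u0 v hP11a hP11a,
      pd_const_mul (4*lam2) u0 v, pd_const_mul 4 u0 v]
    ring
  -- differentiating a second time
  have m1 : AnalyticOnNhd ℂ (fun v => pd u0 P11 v * P11 v) Set.univ := hQa.mul hP11a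
  have m2 : AnalyticOnNhd ℂ (fun v => P11 v * pd u0 P11 v) Set.univ := hP11a.mul hQa
  have g1 : AnalyticOnNhd ℂ
      (fun v => 6 * (pd u0 P11 v * P11 v + P11 v * pd u0 P11 v)) Set.univ :=
    analyticOnNhd_const.mul (m1.add m2)
  have g2 : AnalyticOnNhd ℂ (fun v => 4 * lam2 * pd u0 P11 v) Set.univ :=
    analyticOnNhd_const.mul hQa
  have g3 : AnalyticOnNhd ℂ (fun v => 4 * pd u0 P13 v) Set.univ :=
    analyticOnNhd_const.mul hRa
  have g12 : AnalyticOnNhd ℂ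
      (fun v => 6 * (pd u0 P11 v * P11 v + P11 v * pd u0 P11 v)
        + 4 * lam2 * pd u0 P11 v) Set.univ := g1.add g2
  have hD : ∀ u, pd u0 (pd u0 (pd u0 (pd u0 P11))) u
      = 6 * (pd u0 (pd u0 P11) u * P11 u + pd u0 P11 u * pd u0 P11 u
          + (pd u0 P11 u * pd u0 P11 u + P11 u * pd u0 (pd u0 P11) u))
        + 4 * lam2 * pd u0 (pd u0 P11) u + 4 * pd u0 (pd u0 P13) u := by
    intro u
    rw [hCfun]
    rw [pd_add u0 u g12 g3, pd_add u0 u g1 g2, pd_const_mul 6 u0 u,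
      pd_add u0 u m1 m2, pd_mul u0 u hQa hP11a, pd_mul u0 u hP11a hQa,
      pd_const_mul (4*lam2) u0 u, pd_const_mul 4 u0 u]
  -- chain rule computations in t-variables
  have key0 : ∀ F : (Fin g → ℂ) → ℂ,
      pd 0 (fun s => -2 * F (phi g μ ϱ s)) = fun s => -2 * pd u0 F (phi g μ ϱ s) := by
    intro F
    funext s
    have h : pd 0 (fun s => -2 * F (phi g μ ϱ s)) s
        = pd u0 (fun u => -2 * F u) (phi g μ ϱ s) := chain0 u0 hu0 (fun u => -2 * F u) s
    rw [h, pd_const_mul (-2) u0]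
  have eA : pd 0 (fun s => -2 * P11 (phi g μ ϱ s))
      = fun s => -2 * pd u0 P11 (phi g μ ϱ s) := key0 P11
  have eB : pd 0 (fun s => -2 * pd u0 P11 (phi g μ ϱ s))
      = fun s => -2 * pd u0 (pd u0 P11) (phi g μ ϱ s) := key0 (pd u0 P11)
  have eB2 : pd 0 (fun s => -2 * pd u0 (pd u0 P11) (phi g μ ϱ s))
      = fun s => -2 * pd u0 (pd u0 (pd u0 P11)) (phi g μ ϱ s) := key0 (pd u0 (pd u0 P11))
  have eC : pd 0 (pd 0 (pd 0 (fun s => -2 * P11 (phi g μ ϱ s))))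
      = fun s => -2 * pd u0 (pd u0 (pd u0 P11)) (phi g μ ϱ s) := by
    rw [eA, eB, eB2]
  have eS : pd 2 (fun s => -2 * P11 (phi g μ ϱ s))
      = fun s => -4 * (-2 * pd u0 P13 (phi g μ ϱ s)) := by
    funext s
    have h : pd 2 (fun r => -2 * P11 (phi g μ ϱ r)) s
        = -4 * pd u1 (fun u => -2 * P11 u) (phi g μ ϱ s) := chain2 u1 hu1 hH2a s
    rw [h, pd_const_mul (-2) u1, hS]
  have eM : pd 1 (fun s => -2 * P11 (phi g μ ϱ s))
      = fun s => 2*μ * (-2 * pd u0 P11 (phi g μ ϱ s)) := by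
    funext s
    have h : pd 1 (fun r => -2 * P11 (phi g μ ϱ r)) s
        = 2*μ * pd u0 (fun u => -2 * P11 u) (phi g μ ϱ s) := chain1 u0 hu0 hH2a s
    rw [h, pd_const_mul (-2) u0]
  -- analyticity for the big inner function
  have k1 : AnalyticOnNhd ℂ (fun v => -4 * (-2 * pd u0 P13 v)) Set.univ :=
    analyticOnNhd_const.mul (analyticOnNhd_const.mul hRa)
  have kF : AnalyticOnNhd ℂ (fun v => 6 * (-2 * P11 v)) Set.univ :=
    analyticOnNhd_const.mul hH2a
  have k2 : AnalyticOnNhd ℂ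
      (fun v => 6 * (-2 * P11 v) * (-2 * pd u0 P11 v)) Set.univ := kF.mul hAa2
  have k12 : AnalyticOnNhd ℂ
      (fun v => -4 * (-2 * pd u0 P13 v) + 6 * (-2 * P11 v) * (-2 * pd u0 P11 v))
      Set.univ := k1.add k2
  have hK : ∀ u, pd u0 (fun v => -4 * (-2 * pd u0 P13 v)
        + 6 * (-2 * P11 v) * (-2 * pd u0 P11 v)
        + -2 * pd u0 (pd u0 (pd u0 P11)) v) u
      = -4 * (-2 * pd u0 (pd u0 P13) u)
        + (6 * (-2 * pd u0 P11 u) * (-2 * pd u0 P11 u)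
          + 6 * (-2 * P11 u) * (-2 * pd u0 (pd u0 P11) u))
        + -2 * pd u0 (pd u0 (pd u0 (pd u0 P11))) u := by
    intro u
    rw [pd_add u0 u k12 (analyticOnNhd_const.mul hCa), pd_add u0 u k1 k2,
      pd_const_mul (-4) u0 u, pd_const_mul (-2) u0 u,
      pd_mul u0 u kF hAa2, pd_const_mul 6 u0 u, pd_const_mul (-2) u0 u,
      pd_const_mul (-2) u0 u, pd_const_mul (-2) u0 u]
  -- main proof
  have main : IsKPI (fun s => -2 * P11 (phi g μ ϱ s)) := by
    intro t
    show pd 0 (fun s => pd 2 (fun r => -2 * P11 (phi g μ ϱ r)) s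
        + 6 * (-2 * P11 (phi g μ ϱ s)) * pd 0 (fun r => -2 * P11 (phi g μ ϱ r)) s
        + pd 0 (pd 0 (pd 0 (fun r => -2 * P11 (phi g μ ϱ r)))) s) t
      = pd 1 (pd 1 (fun r => -2 * P11 (phi g μ ϱ r))) t
    have hsum : (fun s => pd 2 (fun r => -2 * P11 (phi g μ ϱ r)) s
        + 6 * (-2 * P11 (phi g μ ϱ s)) * pd 0 (fun r => -2 * P11 (phi g μ ϱ r)) s
        + pd 0 (pd 0 (pd 0 (fun r => -2 * P11 (phi g μ ϱ r)))) s)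
        = fun s => -4 * (-2 * pd u0 P13 (phi g μ ϱ s))
          + 6 * (-2 * P11 (phi g μ ϱ s)) * (-2 * pd u0 P11 (phi g μ ϱ s))
          + -2 * pd u0 (pd u0 (pd u0 P11)) (phi g μ ϱ s) := by
      funext s
      have h1 : pd 2 (fun r => -2 * P11 (phi g μ ϱ r)) s
          = -4 * (-2 * pd u0 P13 (phi g μ ϱ s)) := congrFun eS s
      have h2 : pd 0 (fun r => -2 * P11 (phi g μ ϱ r)) s
          = -2 * pd u0 P11 (phi g μ ϱ s) := congrFun eA s
      have h3 : pd 0 (pd 0 (pd 0 (fun r => -2 * P11 (phi g μ ϱ r)))) s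
          = -2 * pd u0 (pd u0 (pd u0 P11)) (phi g μ ϱ s) := congrFun eC s
      rw [h1, h2, h3]
    rw [hsum]
    have hL : pd 0 (fun s => -4 * (-2 * pd u0 P13 (phi g μ ϱ s))
        + 6 * (-2 * P11 (phi g μ ϱ s)) * (-2 * pd u0 P11 (phi g μ ϱ s))
        + -2 * pd u0 (pd u0 (pd u0 P11)) (phi g μ ϱ s)) t
        = pd u0 (fun v => -4 * (-2 * pd u0 P13 v)
          + 6 * (-2 * P11 v) * (-2 * pd u0 P11 v)
          + -2 * pd u0 (pd u0 (pd u0 P11)) v) (phi g μ ϱ t) :=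
      chain0 u0 hu0 (fun v => -4 * (-2 * pd u0 P13 v)
        + 6 * (-2 * P11 v) * (-2 * pd u0 P11 v)
        + -2 * pd u0 (pd u0 (pd u0 P11)) v) t
    rw [hL, hK (phi g μ ϱ t), hD (phi g μ ϱ t)]
    -- right-hand side
    rw [eM, pd_const_mul (2*μ) 1 t]
    have h5 : pd 1 (fun s => -2 * pd u0 P11 (phi g μ ϱ s)) t
        = 2*μ * pd u0 (fun u => -2 * pd u0 P11 u) (phi g μ ϱ t) := chain1 u0 hu0 hAa2 t
    rw [h5, pd_const_mul (-2) u0]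
    rw [← hμ]
    ring
  exact main
end

section
/- Let g ≥ 3 be an integer and λ_{4g−6}, λ_{4g−4}, λ_{4g−2}, λ_{4g}, λ_{4g+2} ∈ ℂ with λ_{4g+2} ≠ 0 (with the convention λ_j = 0 for j < 0, λ_0 = 1 if an index falls outside the list). Let W : ℂ^g → ℂ be an entire function of the variables (u_1, u_3, …, u_{2g−1}) and define ℘_{i_1,…,i_k} = −∂_{u_{i_1}}⋯∂_{u_{i_k}} W, with the convention that ℘ with any index outside {1,3,…,2g−1} is 0. Assume that identically on ℂ^g: ℘_{2g−1,2g−1,2g−1,2g−1} = 6℘_{2g−1,2g−1}² + 4λ_{4g}℘_{2g−1,2g−3} + 4λ_{4g+2}(4℘_{2g−1,2g−5} − 3℘_{2g−3,2g−3}) + 4λ_{4g−2}℘_{2g−1,2g−1} − 8λ_{4g+2}λ_{4g−6} + 2λ_{4g}λ_{4g−4}. Fix μ ∈ ℂ with μ² = −3λ_{4g+2}, constants b_1,…,b_{g−3} ∈ ℂ (no constants if g = 3), and set 𝔠 = −16λ_{4g+2}, 𝔡 = 2μ, 𝔢 = λ_{4g}/μ, 𝔣 = (2/3)λ_{4g−2}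 + λ_{4g}²/(18λ_{4g+2}). Then φ(t_1,t_2,t_3) := −2·℘_{2g−1,2g−1}(b_1,…,b_{g−3}, 𝔠t_3, 𝔡t_2, t_1 + 𝔢t_2) − 𝔣 (the arguments substituted for (u_1, u_3, …, u_{2g−5}, u_{2g−3}, u_{2g−1}) in that order) satisfies the KP-I equation ∂_{t_1}(∂_{t_3}φ + 6φ·∂_{t_1}φ + ∂_{t_1}³φ) = ∂_{t_2}²φ identically on ℂ³. -/
noncomputable def Dv {n : ℕ} (v : Fin n → ℂ) (F : (Fin n → ℂ) → ℂ) : (Fin n → ℂ) → ℂ :=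
  fun x => fderiv ℂ F x v

lemma analyticOnNhd_dv {n : ℕ} {F : (Fin n → ℂ) → ℂ}
    (hF : AnalyticOnNhd ℂ F Set.univ) (v : Fin n → ℂ) :
    AnalyticOnNhd ℂ (Dv v F) Set.univ := by
  have h1 : AnalyticOnNhd ℂ (fderiv ℂ F) Set.univ := hF.fderiv
  exact (ContinuousLinearMap.apply ℂ ℂ v).comp_analyticOnNhd h1

lemma diff_of_an {n : ℕ} {F : (Fin n → ℂ) → ℂ}
    (hF : AnalyticOnNhd ℂ F Set.univ) : Differentiable ℂ F :=
  fun x => (hF x trivial).differentiableAt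

lemma dv_comm {n : ℕ} {F : (Fin n → ℂ) → ℂ} (hF : AnalyticOnNhd ℂ F Set.univ)
    (v w : Fin n → ℂ) : Dv v (Dv w F) = Dv w (Dv v F) := by
  have hd : ∀ y, HasFDerivAt F (fderiv ℂ F y) y := fun y =>
    (hF y trivial).differentiableAt.hasFDerivAt
  have hd2 : ∀ x, HasFDerivAt (fderiv ℂ F) (fderiv ℂ (fderiv ℂ F) x) x := fun x =>
    ((hF.fderiv) x trivial).differentiableAt.hasFDerivAt
  have key : ∀ (x : Fin n → ℂ) (a b : Fin n → ℂ),
      Dv a (Dv b F) x = fderiv ℂ (fderiv ℂ F) x a b := by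
    intro x a b
    have : Dv a (Dv b F) x = fderiv ℂ (fun y => (fderiv ℂ F y) b) x a := rfl
    rw [this, fderiv_clm_apply (hd2 x).differentiableAt (differentiableAt_const b)]
    simp
  funext x
  rw [key x v w, key x w v]
  exact second_derivative_symmetric hd (hd2 x) v w

lemma dv_add {n : ℕ} {f h : (Fin n → ℂ) → ℂ} {x : Fin n → ℂ}
    (hf : DifferentiableAt ℂ f x) (hh : DifferentiableAt ℂ h x) (v : Fin n → ℂ) :
    Dv v (fun y => f y + h y) x = Dv v f x + Dv v h x := by
  simp [Dv, fderiv_fun_add hf hh]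

lemma dv_const_mul {n : ℕ} {f : (Fin n → ℂ) → ℂ} {x : Fin n → ℂ}
    (hf : DifferentiableAt ℂ f x) (a : ℂ) (v : Fin n → ℂ) :
    Dv v (fun y => a * f y) x = a * Dv v f x := by
  simp [Dv, fderiv_const_mul hf a]

lemma dv_mul {n : ℕ} {f h : (Fin n → ℂ) → ℂ} {x : Fin n → ℂ}
    (hf : DifferentiableAt ℂ f x) (hh : DifferentiableAt ℂ h x) (v : Fin n → ℂ) :
    Dv v (fun y => f y * h y) x = Dv v f x * h x + f x * Dv v h x := by
  simp [Dv, fderiv_fun_mul hf hh]; ring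

lemma dv_sub_const {n : ℕ} {f : (Fin n → ℂ) → ℂ} {x : Fin n → ℂ}
    (c : ℂ) (v : Fin n → ℂ) :
    Dv v (fun y => f y - c) x = Dv v f x := by
  simp [Dv, fderiv_sub_const]

lemma dv_vec_smul {n : ℕ} (F : (Fin n → ℂ) → ℂ) (a : ℂ) (v : Fin n → ℂ) (x : Fin n → ℂ) :
    Dv (a • v) F x = a * Dv v F x := by
  simp [Dv]

lemma dv_vec_add {n : ℕ} (F : (Fin n → ℂ) → ℂ) (v w : Fin n → ℂ) (x : Fin n → ℂ) :
    Dv (v + w) F x = Dv v F x + Dv w F x := by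
  simp [Dv]

-- key HasDerivAt along a line
lemma hasDerivAt_line {n : ℕ} {F : (Fin n → ℂ) → ℂ} {p : Fin n → ℂ}
    (hF : DifferentiableAt ℂ F p) (v : Fin n → ℂ) (z₀ : ℂ) :
    HasDerivAt (fun z => F (p + (z - z₀) • v)) (Dv v F p) z₀ := by
  have h2 : HasDerivAt (fun z : ℂ => p + (z - z₀) • v) v z₀ := by
    simpa using (((hasDerivAt_id z₀).sub_const z₀).smul_const v).const_add p
  have hF' : HasFDerivAt F (fderiv ℂ F p) (p + (z₀ - z₀) • v) := by
    simpa using hF.hasFDerivAt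
  have h3 := hF'.comp_hasDerivAt z₀ h2
  exact h3

lemma pd_eq_dv {n : ℕ} {F : (Fin n → ℂ) → ℂ} (hF : Differentiable ℂ F) (j : Fin n) :
    pd j F = Dv (Pi.single j 1) F := by
  funext t
  have h1 : ∀ z : ℂ, Function.update t j z = t + (z - t j) • (Pi.single j 1 : Fin n → ℂ) := by
    intro z; funext k
    by_cases hk : k = j
    · subst hk; simp
    · simp [Function.update_of_ne hk, Pi.single_apply, hk]
  have h2 : HasDerivAt (fun z => F (Function.update t j z)) (Dv (Pi.single j 1) F t) (t j) := by
    have h := hasDerivAt_line (hF t) (Pi.single j 1) (t j)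
    have he : (fun z => F (Function.update t j z))
        = fun z => F (t + (z - t j) • (Pi.single j 1 : Fin n → ℂ)) := by
      funext z; rw [h1 z]
    rw [he]; exact h
  exact h2.deriv

lemma pd_comp_affine {g : ℕ} {F : (Fin g → ℂ) → ℂ} (hF : Differentiable ℂ F)
    (c v0 v1 v2 : Fin g → ℂ) (j : Fin 3) :
    pd j (fun t => F (c + t 0 • v0 + t 1 • v1 + t 2 • v2))
      = fun t => Dv (![v0, v1, v2] j) F (c + t 0 • v0 + t 1 • v1 + t 2 • v2) := by
  funext t
  have key : ∀ z : ℂ, (c + (Function.update t j z) 0 • v0 + (Function.update t j z) 1 • v1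
      + (Function.update t j z) 2 • v2)
      = (c + t 0 • v0 + t 1 • v1 + t 2 • v2) + (z - t j) • ![v0, v1, v2] j := by
    intro z
    fin_cases j <;>
      · funext k
        simp [Function.update_apply]
        ring
  have h := hasDerivAt_line (p := c + t 0 • v0 + t 1 • v1 + t 2 • v2) (hF _) (![v0, v1, v2] j) (t j)
  have he : (fun z => F (c + (Function.update t j z) 0 • v0 + (Function.update t j z) 1 • v1
      + (Function.update t j z) 2 • v2))
      = fun z => F ((c + t 0 • v0 + t 1 • v1 + t 2 • v2) + (z - t j) • ![v0, v1, v2] j) := by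
    funext z; rw [key z]
  show deriv _ _ = _
  rw [he]
  exact h.deriv

lemma dv_sub {n : ℕ} {f h : (Fin n → ℂ) → ℂ} {x : Fin n → ℂ}
    (hf : DifferentiableAt ℂ f x) (hh : DifferentiableAt ℂ h x) (v : Fin n → ℂ) :
    Dv v (fun y => f y - h y) x = Dv v f x - Dv v h x := by
  simp [Dv, fderiv_fun_sub hf hh]

lemma dv_const_mul_fun {n : ℕ} {G : (Fin n → ℂ) → ℂ} (hG : Differentiable ℂ G)
    (a : ℂ) (v : Fin n → ℂ) :
    Dv v (fun x => a * G x) = fun x => a * Dv v G x :=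
  funext fun x => dv_const_mul (hG x) a v

lemma dv_add_const {n : ℕ} {f : (Fin n → ℂ) → ℂ} {x : Fin n → ℂ}
    (c : ℂ) (v : Fin n → ℂ) :
    Dv v (fun y => f y + c) x = Dv v f x := by
  simp [Dv, fderiv_add_const]

-- expansion of the KP bracket
lemma dv_expand_lhs {n : ℕ} {f1 f2 f3 f4 : (Fin n → ℂ) → ℂ} {u v : Fin n → ℂ}
    (d1 : Differentiable ℂ f1) (d2 : Differentiable ℂ f2) (d3 : Differentiable ℂ f3)
    (d4 : Differentiable ℂ f4) (a c : ℂ) :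
    Dv v (fun x => a * (2 * f1 x) + 6 * (2 * f2 x - c) * (2 * f3 x) + 2 * f4 x) u
      = a * (2 * Dv v f1 u) + (6 * (2 * Dv v f2 u)) * (2 * f3 u)
        + (6 * (2 * f2 u - c)) * (2 * Dv v f3 u) + 2 * Dv v f4 u := by
  have h1 : DifferentiableAt ℂ (fun x => a * (2 * f1 x) + 6 * (2 * f2 x - c) * (2 * f3 x)) u :=
    by fun_prop
  have h2 : DifferentiableAt ℂ (fun x => 2 * f4 x) u := by fun_prop
  have h3 : DifferentiableAt ℂ (fun x => a * (2 * f1 x)) u := by fun_prop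
  have h4 : DifferentiableAt ℂ (fun x => 6 * (2 * f2 x - c) * (2 * f3 x)) u := by fun_prop
  have h5 : DifferentiableAt ℂ (fun x => 6 * (2 * f2 x - c)) u := by fun_prop
  have h6 : DifferentiableAt ℂ (fun x => 2 * f3 x) u := by fun_prop
  have h7 : DifferentiableAt ℂ (fun x => 2 * f1 x) u := by fun_prop
  have h8 : DifferentiableAt ℂ (fun x => 2 * f2 x - c) u := by fun_prop
  rw [dv_add h1 h2, dv_add h3 h4, dv_const_mul h7, dv_const_mul (d1 u),
    dv_mul h5 h6, dv_const_mul h8, dv_sub_const, dv_const_mul (d2 u),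
    dv_const_mul (d3 u), dv_const_mul (d4 u)]
  ring

lemma dv_expand_lin2 {n : ℕ} {f1 f2 : (Fin n → ℂ) → ℂ} {u v : Fin n → ℂ}
    (d1 : Differentiable ℂ f1) (d2 : Differentiable ℂ f2) (a b : ℂ) :
    Dv v (fun x => a * (2 * f1 x) + b * (2 * f2 x)) u
      = a * (2 * Dv v f1 u) + b * (2 * Dv v f2 u) := by
  have h1 : DifferentiableAt ℂ (fun x => a * (2 * f1 x)) u := by fun_prop
  have h2 : DifferentiableAt ℂ (fun x => b * (2 * f2 x)) u := by fun_prop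
  have h3 : DifferentiableAt ℂ (fun x => 2 * f1 x) u := by fun_prop
  have h4 : DifferentiableAt ℂ (fun x => 2 * f2 x) u := by fun_prop
  rw [dv_add h1 h2, dv_const_mul h3, dv_const_mul h4, dv_const_mul (d1 u), dv_const_mul (d2 u)]

lemma dv_expand_poly {n : ℕ} {p q g3 g5 h33 s : (Fin n → ℂ) → ℂ} {u v : Fin n → ℂ}
    (dp : Differentiable ℂ p) (dq : Differentiable ℂ q) (dg3 : Differentiable ℂ g3)
    (dg5 : Differentiable ℂ g5) (dh33 : Differentiable ℂ h33) (ds : Differentiable ℂ s)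
    (c0 c1 c2 c3 c4 c5 : ℂ) :
    Dv v (fun x => c0 * (p x * q x) + c1 * g3 x + c2 * g5 x + c3 * h33 x + c4 * s x + c5) u
      = c0 * (Dv v p u * q u + p u * Dv v q u) + c1 * Dv v g3 u + c2 * Dv v g5 u
        + c3 * Dv v h33 u + c4 * Dv v s u := by
  have h0 : DifferentiableAt ℂ
      (fun x => c0 * (p x * q x) + c1 * g3 x + c2 * g5 x + c3 * h33 x + c4 * s x) u := by fun_prop
  have h1 : DifferentiableAt ℂ
      (fun x => c0 * (p x * q x) + c1 * g3 x + c2 * g5 x + c3 * h33 x) u := by fun_prop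
  have h2 : DifferentiableAt ℂ (fun x => c0 * (p x * q x) + c1 * g3 x + c2 * g5 x) u := by fun_prop
  have h3 : DifferentiableAt ℂ (fun x => c0 * (p x * q x) + c1 * g3 x) u := by fun_prop
  have h4 : DifferentiableAt ℂ (fun x => c0 * (p x * q x)) u := by fun_prop
  have h5 : DifferentiableAt ℂ (fun x => p x * q x) u := by fun_prop
  have h6 : DifferentiableAt ℂ (fun x => c1 * g3 x) u := by fun_prop
  have h7 : DifferentiableAt ℂ (fun x => c2 * g5 x) u := by fun_prop
  have h8 : DifferentiableAt ℂ (fun x => c3 * h33 x) u := by fun_prop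
  have h9 : DifferentiableAt ℂ (fun x => c4 * s x) u := by fun_prop
  rw [dv_add_const, dv_add h1 h9, dv_add h2 h8, dv_add h3 h7, dv_add h4 h6,
    dv_const_mul h5, dv_mul (dp u) (dq u), dv_const_mul (dg3 u), dv_const_mul (dg5 u),
    dv_const_mul (dh33 u), dv_const_mul (ds u)]

lemma dv_expand_poly2 {n : ℕ} {p q g3 g5 h33 s : (Fin n → ℂ) → ℂ} {u v : Fin n → ℂ}
    (dp : Differentiable ℂ p) (dq : Differentiable ℂ q) (dg3 : Differentiable ℂ g3)
    (dg5 : Differentiable ℂ g5) (dh33 : Differentiable ℂ h33) (ds : Differentiable ℂ s)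
    (c0 c1 c2 c3 c4 : ℂ) :
    Dv v (fun x => c0 * (p x * q x + q x * p x) + c1 * g3 x + c2 * g5 x + c3 * h33 x + c4 * s x) u
      = c0 * ((Dv v p u * q u + p u * Dv v q u) + (Dv v q u * p u + q u * Dv v p u))
        + c1 * Dv v g3 u + c2 * Dv v g5 u + c3 * Dv v h33 u + c4 * Dv v s u := by
  have h1 : DifferentiableAt ℂ
      (fun x => c0 * (p x * q x + q x * p x) + c1 * g3 x + c2 * g5 x + c3 * h33 x) u := by fun_prop
  have h2 : DifferentiableAt ℂ
      (fun x => c0 * (p x * q x + q x * p x) + c1 * g3 x + c2 * g5 x) u := by fun_prop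
  have h3 : DifferentiableAt ℂ (fun x => c0 * (p x * q x + q x * p x) + c1 * g3 x) u := by fun_prop
  have h4 : DifferentiableAt ℂ (fun x => c0 * (p x * q x + q x * p x)) u := by fun_prop
  have h5 : DifferentiableAt ℂ (fun x => p x * q x + q x * p x) u := by fun_prop
  have h5a : DifferentiableAt ℂ (fun x => p x * q x) u := by fun_prop
  have h5b : DifferentiableAt ℂ (fun x => q x * p x) u := by fun_prop
  have h6 : DifferentiableAt ℂ (fun x => c1 * g3 x) u := by fun_prop
  have h7 : DifferentiableAt ℂ (fun x => c2 * g5 x) u := by fun_prop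
  have h8 : DifferentiableAt ℂ (fun x => c3 * h33 x) u := by fun_prop
  have h9 : DifferentiableAt ℂ (fun x => c4 * s x) u := by fun_prop
  rw [dv_add h1 h9, dv_add h2 h8, dv_add h3 h7, dv_add h4 h6, dv_const_mul h5,
    dv_add h5a h5b, dv_mul (dp u) (dq u), dv_mul (dq u) (dp u), dv_const_mul (dg3 u),
    dv_const_mul (dg5 u), dv_const_mul (dh33 u), dv_const_mul (ds u)]


lemma key_ulevel {n : ℕ} (W : (Fin n → ℂ) → ℂ) (hW : AnalyticOnNhd ℂ W Set.univ)
    (eg e3 e5 : Fin n → ℂ) (lam4g lam4gp2 lam4gm2 K μ : ℂ)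
    (hlam : lam4gp2 ≠ 0) (hμ : μ^2 = -3*lam4gp2)
    (Fu : (Fin n → ℂ) → ℂ)
    (hFu : Fu = fun u => 2 * (Dv eg (Dv eg W)) u
      - ((2/3) * lam4gm2 + lam4g^2 / (18 * lam4gp2)))
    (hrel' : (Dv eg (Dv eg (Dv eg (Dv eg W)))) = (fun x => (-6) * ((Dv eg (Dv eg W)) x * (Dv eg (Dv eg W)) x) + (4*lam4g) * (Dv eg (Dv e3 W)) x + (16*lam4gp2) * (Dv eg (Dv e5 W)) x + (-12*lam4gp2) * (Dv e3 (Dv e3 W)) x + (4*lam4gm2) * (Dv eg (Dv eg W)) x + (-K))) :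
    ∀ u, Dv eg (fun x => (-16*lam4gp2) * Dv e5 Fu x + 6 * Fu x * Dv eg Fu x
        + Dv eg (Dv eg (Dv eg Fu)) x) u
      = Dv ((lam4g/μ) • eg + (2*μ) • e3) (Dv ((lam4g/μ) • eg + (2*μ) • e3) Fu) u := by
  intro u
  -- analyticity bookkeeping
  have aW1 : AnalyticOnNhd ℂ (Dv eg W) Set.univ := analyticOnNhd_dv hW eg
  have aS : AnalyticOnNhd ℂ (Dv eg (Dv eg W)) Set.univ := analyticOnNhd_dv aW1 eg
  have aW3 : AnalyticOnNhd ℂ (Dv eg (Dv eg (Dv eg W))) Set.univ := analyticOnNhd_dv aS eg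
  have aE3 : AnalyticOnNhd ℂ (Dv e3 W) Set.univ := analyticOnNhd_dv hW e3
  have aE5 : AnalyticOnNhd ℂ (Dv e5 W) Set.univ := analyticOnNhd_dv hW e5
  have aG3 : AnalyticOnNhd ℂ (Dv eg (Dv e3 W)) Set.univ := analyticOnNhd_dv aE3 eg
  have aG5 : AnalyticOnNhd ℂ (Dv eg (Dv e5 W)) Set.univ := analyticOnNhd_dv aE5 eg
  have aH33 : AnalyticOnNhd ℂ (Dv e3 (Dv e3 W)) Set.univ := analyticOnNhd_dv aE3 e3
  have aQ3 : AnalyticOnNhd ℂ (Dv eg (Dv eg (Dv e3 W))) Set.univ := analyticOnNhd_dv aG3 eg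
  have aQ5 : AnalyticOnNhd ℂ (Dv eg (Dv eg (Dv e5 W))) Set.univ := analyticOnNhd_dv aG5 eg
  have aY33 : AnalyticOnNhd ℂ (Dv eg (Dv e3 (Dv e3 W))) Set.univ := analyticOnNhd_dv aH33 eg
  have dS : Differentiable ℂ (Dv eg (Dv eg W)) := diff_of_an aS
  have dW3 : Differentiable ℂ (Dv eg (Dv eg (Dv eg W))) := diff_of_an aW3
  have dG3 : Differentiable ℂ (Dv eg (Dv e3 W)) := diff_of_an aG3
  have dG5 : Differentiable ℂ (Dv eg (Dv e5 W)) := diff_of_an aG5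
  have dH33 : Differentiable ℂ (Dv e3 (Dv e3 W)) := diff_of_an aH33
  have dQ3 : Differentiable ℂ (Dv eg (Dv eg (Dv e3 W))) := diff_of_an aQ3
  have dQ5 : Differentiable ℂ (Dv eg (Dv eg (Dv e5 W))) := diff_of_an aQ5
  have dY33 : Differentiable ℂ (Dv eg (Dv e3 (Dv e3 W))) := diff_of_an aY33
  have dRR : Differentiable ℂ (fun x => (-6) * ((Dv eg (Dv eg W)) x * (Dv eg (Dv eg W)) x) + (4*lam4g) * (Dv eg (Dv e3 W)) x + (16*lam4gp2) * (Dv eg (Dv e5 W)) x + (-12*lam4gp2) * (Dv e3 (Dv e3 W)) x + (4*lam4gm2) * (Dv eg (Dv eg W)) x + (-K)) := by fun_prop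
  have dR1 : Differentiable ℂ (fun x => (-6) * ((Dv eg (Dv eg (Dv eg W))) x * (Dv eg (Dv eg W)) x + (Dv eg (Dv eg W)) x * (Dv eg (Dv eg (Dv eg W))) x) + (4*lam4g) * (Dv eg (Dv eg (Dv e3 W))) x + (16*lam4gp2) * (Dv eg (Dv eg (Dv e5 W))) x + (-12*lam4gp2) * (Dv eg (Dv e3 (Dv e3 W))) x + (4*lam4gm2) * (Dv eg (Dv eg (Dv eg W))) x) := by fun_prop
  -- commutation of partial derivatives
  have hQ3can : Dv e3 (Dv eg (Dv eg W)) = (Dv eg (Dv eg (Dv e3 W))) := by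
    rw [dv_comm aW1 e3 eg, dv_comm hW e3 eg]
  have hQ5can : Dv e5 (Dv eg (Dv eg W)) = (Dv eg (Dv eg (Dv e5 W))) := by
    rw [dv_comm aW1 e5 eg, dv_comm hW e5 eg]
  have hc1 : Dv e3 (Dv eg (Dv eg (Dv eg W))) = Dv eg (Dv eg (Dv eg (Dv e3 W))) := by
    rw [dv_comm aS e3 eg, hQ3can]
  have hc2 : Dv e3 (Dv eg (Dv eg (Dv e3 W))) = Dv eg (Dv eg (Dv e3 (Dv e3 W))) := by
    rw [dv_comm aG3 e3 eg, dv_comm aE3 e3 eg]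
  -- derivatives of Fu
  have hDvFu : ∀ v : Fin n → ℂ, Dv v Fu = fun x => 2 * Dv v (Dv eg (Dv eg W)) x := by
    intro v; funext x
    rw [hFu, dv_sub_const, dv_const_mul (dS x)]
  -- first derivative of the relation
  have hR1fun : Dv eg (fun x => (-6) * ((Dv eg (Dv eg W)) x * (Dv eg (Dv eg W)) x) + (4*lam4g) * (Dv eg (Dv e3 W)) x + (16*lam4gp2) * (Dv eg (Dv e5 W)) x + (-12*lam4gp2) * (Dv e3 (Dv e3 W)) x + (4*lam4gm2) * (Dv eg (Dv eg W)) x + (-K)) = (fun x => (-6) * ((Dv eg (Dv eg (Dv eg W))) x * (Dv eg (Dv eg W)) x + (Dv eg (Dv eg W)) x * (Dv eg (Dv eg (Dv eg W))) x) + (4*lam4g) * (Dv eg (Dv eg (Dv e3 W))) x + (16*lam4gp2) * (Dv eg (Dv eg (Dv e5 W))) x + (-12*lam4gp2) * (Dv eg (Dv e3 (Dv e3 W))) x + (4*lam4gm2) * (Dv eg (Dv eg (Dv eg W))) x) :=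
    funext fun y => dv_expand_poly dS dS dG3 dG5 dH33 dS
      (-6) (4*lam4g) (16*lam4gp2) (-12*lam4gp2) (4*lam4gm2) (-K)
  -- the third-order term
  have hnested : Dv eg (Dv eg (Dv eg Fu)) = fun x => 2 * (fun x => (-6) * ((Dv eg (Dv eg (Dv eg W))) x * (Dv eg (Dv eg W)) x + (Dv eg (Dv eg W)) x * (Dv eg (Dv eg (Dv eg W))) x) + (4*lam4g) * (Dv eg (Dv eg (Dv e3 W))) x + (16*lam4gp2) * (Dv eg (Dv eg (Dv e5 W))) x + (-12*lam4gp2) * (Dv eg (Dv e3 (Dv e3 W))) x + (4*lam4gm2) * (Dv eg (Dv eg (Dv eg W))) x) x := by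
    rw [hDvFu eg, dv_const_mul_fun dW3 2 eg, hrel', dv_const_mul_fun dRR 2 eg, hR1fun]
  have hsplitX : ∀ G : (Fin n → ℂ) → ℂ, Dv ((lam4g/μ) • eg + (2*μ) • e3) G
      = fun x => (lam4g/μ) * Dv eg G x + (2*μ) * Dv e3 G x := by
    intro G; funext x
    rw [dv_vec_add, dv_vec_smul, dv_vec_smul]
  rw [hnested]
  simp only [hsplitX]
  simp only [hDvFu]
  simp only [hFu]
  simp only [hQ3can, hQ5can]
  rw [dv_expand_lhs dQ5 dS dW3 dR1 (-16*lam4gp2)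
    ((2/3) * lam4gm2 + lam4g^2 / (18 * lam4gp2))]
  rw [dv_expand_lin2 (v := eg) dW3 dQ3 (lam4g/μ) (2*μ),
    dv_expand_lin2 (v := e3) dW3 dQ3 (lam4g/μ) (2*μ)]
  rw [dv_expand_poly2 dW3 dS dQ3 dQ5 dY33 dW3
    (-6) (4*lam4g) (16*lam4gp2) (-12*lam4gp2) (4*lam4gm2)]
  rw [hc1, hc2]
  have hμ0 : μ ≠ 0 := by
    intro h
    apply hlam
    rw [h] at hμ
    simp at hμ
    exact hμ
  have hl : lam4gp2 = -(μ^2)/3 := by linear_combination hμ/3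
  rw [hl]
  have hinv : μ⁻¹^2 * μ^2 = 1 := by field_simp
  field_simp [hμ0]
  linear_combination (0 : ℂ) * (2*μ*lam4g^2*(Dv eg (Dv eg (Dv eg (Dv eg W))) u)
    + 8*μ^3*lam4g*(Dv eg (Dv eg (Dv eg (Dv e3 W))) u)
    + 8*μ^5*(Dv eg (Dv eg (Dv e3 (Dv e3 W))) u)) * hinv

/-- for an entire `W : ℂ^g → ℂ` (`g ≥ 3`, coordinates `u₁,u₃,…,u_{2g-1}`)
whose `℘`-derivatives satisfy the fourth-order relation for `℘_{(2g-1)·4}`, with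
`λ_{4g+2} ≠ 0` and `μ² = -3λ_{4g+2}`, the function
`φ(t₁,t₂,t₃) = -2℘_{2g-1,2g-1}(b₁,…,b_{g-3}, 𝔠t₃, 𝔡t₂, t₁+𝔢t₂) - 𝔣` solves KP-I. -/
theorem stmt_13 (g : ℕ) (hg : 3 ≤ g)
    (lam4gm6 lam4gm4 lam4gm2 lam4g lam4gp2 : ℂ) (hlam : lam4gp2 ≠ 0)
    (W : (Fin g → ℂ) → ℂ) (hW : AnalyticOnNhd ℂ W Set.univ)
    (Pgg Pg3 Pg5 P33 P4 : (Fin g → ℂ) → ℂ)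
    (hPgg : Pgg = fun u => -(pd ⟨g-1, by omega⟩ (pd ⟨g-1, by omega⟩ W) u))
    (hPg3 : Pg3 = fun u => -(pd ⟨g-1, by omega⟩ (pd ⟨g-2, by omega⟩ W) u))
    (hPg5 : Pg5 = fun u => -(pd ⟨g-1, by omega⟩ (pd ⟨g-3, by omega⟩ W) u))
    (hP33 : P33 = fun u => -(pd ⟨g-2, by omega⟩ (pd ⟨g-2, by omega⟩ W) u))
    (hP4 : P4 = fun u =>
      -(pd ⟨g-1, by omega⟩ (pd ⟨g-1, by omega⟩ (pd ⟨g-1, by omega⟩ (pd ⟨g-1, by omega⟩ W))) u))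
    (hrel : ∀ u, P4 u = 6 * (Pgg u)^2 + 4 * lam4g * Pg3 u
      + 4 * lam4gp2 * (4 * Pg5 u - 3 * P33 u) + 4 * lam4gm2 * Pgg u
      - 8 * lam4gp2 * lam4gm6 + 2 * lam4g * lam4gm4)
    (μ : ℂ) (hμ : μ^2 = -3 * lam4gp2) (b : ℕ → ℂ) :
    IsKPI (fun t => -2 * Pgg (fun k =>
      if (k:ℕ) = g-1 then t 0 + (lam4g / μ) * t 1
      else if (k:ℕ) = g-2 then (2*μ) * t 1
      else if (k:ℕ) = g-3 then (-16 * lam4gp2) * t 2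
      else b ((k:ℕ)+1))
      - ((2/3) * lam4gm2 + lam4g^2 / (18 * lam4gp2))) := by
  have hg1 : g - 1 < g := by omega
  have hg2 : g - 2 < g := by omega
  have hg3 : g - 3 < g := by omega
  have hdW : Differentiable ℂ W := diff_of_an hW
  have aW1 : AnalyticOnNhd ℂ (Dv ((Pi.single (⟨g-1, hg1⟩ : Fin g) (1:ℂ) : Fin g → ℂ)) W) Set.univ := analyticOnNhd_dv hW _
  have aS : AnalyticOnNhd ℂ (Dv ((Pi.single (⟨g-1, hg1⟩ : Fin g) (1:ℂ) : Fin g → ℂ)) (Dv ((Pi.single (⟨g-1, hg1⟩ : Fin g) (1:ℂ) : Fin g → ℂ)) W)) Set.univ := analyticOnNhd_dv aW1 _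
  have aW3 : AnalyticOnNhd ℂ (Dv ((Pi.single (⟨g-1, hg1⟩ : Fin g) (1:ℂ) : Fin g → ℂ)) (Dv ((Pi.single (⟨g-1, hg1⟩ : Fin g) (1:ℂ) : Fin g → ℂ)) (Dv ((Pi.single (⟨g-1, hg1⟩ : Fin g) (1:ℂ) : Fin g → ℂ)) W))) Set.univ := analyticOnNhd_dv aS _
  have aE3 : AnalyticOnNhd ℂ (Dv ((Pi.single (⟨g-2, hg2⟩ : Fin g) (1:ℂ) : Fin g → ℂ)) W) Set.univ := analyticOnNhd_dv hW _
  have dS : Differentiable ℂ (Dv ((Pi.single (⟨g-1, hg1⟩ : Fin g) (1:ℂ) : Fin g → ℂ)) (Dv ((Pi.single (⟨g-1, hg1⟩ : Fin g) (1:ℂ) : Fin g → ℂ)) W)) := diff_of_an aS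
  -- converting pd to Dv in the hypotheses
  have hPgg2 : Pgg = fun u => -(Dv ((Pi.single (⟨g-1, hg1⟩ : Fin g) (1:ℂ) : Fin g → ℂ)) (Dv ((Pi.single (⟨g-1, hg1⟩ : Fin g) (1:ℂ) : Fin g → ℂ)) W) u) := by
    rw [hPgg, pd_eq_dv hdW ⟨g-1, hg1⟩, pd_eq_dv (diff_of_an aW1) ⟨g-1, hg1⟩]
  have hPg32 : Pg3 = fun u => -(Dv ((Pi.single (⟨g-1, hg1⟩ : Fin g) (1:ℂ) : Fin g → ℂ)) (Dv ((Pi.single (⟨g-2, hg2⟩ : Fin g) (1:ℂ) : Fin g → ℂ)) W) u) := by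
    rw [hPg3, pd_eq_dv hdW ⟨g-2, hg2⟩, pd_eq_dv (diff_of_an aE3) ⟨g-1, hg1⟩]
  have hPg52 : Pg5 = fun u => -(Dv ((Pi.single (⟨g-1, hg1⟩ : Fin g) (1:ℂ) : Fin g → ℂ)) (Dv ((Pi.single (⟨g-3, hg3⟩ : Fin g) (1:ℂ) : Fin g → ℂ)) W) u) := by
    rw [hPg5, pd_eq_dv hdW ⟨g-3, hg3⟩,
      pd_eq_dv (diff_of_an (analyticOnNhd_dv hW ((Pi.single (⟨g-3, hg3⟩ : Fin g) (1:ℂ) : Fin g → ℂ)))) ⟨g-1, hg1⟩]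
  have hP332 : P33 = fun u => -(Dv ((Pi.single (⟨g-2, hg2⟩ : Fin g) (1:ℂ) : Fin g → ℂ)) (Dv ((Pi.single (⟨g-2, hg2⟩ : Fin g) (1:ℂ) : Fin g → ℂ)) W) u) := by
    rw [hP33, pd_eq_dv hdW ⟨g-2, hg2⟩, pd_eq_dv (diff_of_an aE3) ⟨g-2, hg2⟩]
  have hP42 : P4 = fun u => -(Dv ((Pi.single (⟨g-1, hg1⟩ : Fin g) (1:ℂ) : Fin g → ℂ)) (Dv ((Pi.single (⟨g-1, hg1⟩ : Fin g) (1:ℂ) : Fin g → ℂ)) (Dv ((Pi.single (⟨g-1, hg1⟩ : Fin g) (1:ℂ) : Fin g → ℂ)) (Dv ((Pi.single (⟨g-1, hg1⟩ : Fin g) (1:ℂ) : Fin g → ℂ)) W))) u) := by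
    rw [hP4, pd_eq_dv hdW ⟨g-1, hg1⟩, pd_eq_dv (diff_of_an aW1) ⟨g-1, hg1⟩,
      pd_eq_dv (diff_of_an aS) ⟨g-1, hg1⟩, pd_eq_dv (diff_of_an aW3) ⟨g-1, hg1⟩]
  -- the differentiated relation in canonical form
  have hrel2 : Dv ((Pi.single (⟨g-1, hg1⟩ : Fin g) (1:ℂ) : Fin g → ℂ)) (Dv ((Pi.single (⟨g-1, hg1⟩ : Fin g) (1:ℂ) : Fin g → ℂ)) (Dv ((Pi.single (⟨g-1, hg1⟩ : Fin g) (1:ℂ) : Fin g → ℂ)) (Dv ((Pi.single (⟨g-1, hg1⟩ : Fin g) (1:ℂ) : Fin g → ℂ)) W)))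
      = fun x => (-6) * (Dv ((Pi.single (⟨g-1, hg1⟩ : Fin g) (1:ℂ) : Fin g → ℂ)) (Dv ((Pi.single (⟨g-1, hg1⟩ : Fin g) (1:ℂ) : Fin g → ℂ)) W) x * Dv ((Pi.single (⟨g-1, hg1⟩ : Fin g) (1:ℂ) : Fin g → ℂ)) (Dv ((Pi.single (⟨g-1, hg1⟩ : Fin g) (1:ℂ) : Fin g → ℂ)) W) x)
        + (4*lam4g) * Dv ((Pi.single (⟨g-1, hg1⟩ : Fin g) (1:ℂ) : Fin g → ℂ)) (Dv ((Pi.single (⟨g-2, hg2⟩ : Fin g) (1:ℂ) : Fin g → ℂ)) W) x + (16*lam4gp2) * Dv ((Pi.single (⟨g-1, hg1⟩ : Fin g) (1:ℂ) : Fin g → ℂ)) (Dv ((Pi.single (⟨g-3, hg3⟩ : Fin g) (1:ℂ) : Fin g → ℂ)) W) x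
        + (-12*lam4gp2) * Dv ((Pi.single (⟨g-2, hg2⟩ : Fin g) (1:ℂ) : Fin g → ℂ)) (Dv ((Pi.single (⟨g-2, hg2⟩ : Fin g) (1:ℂ) : Fin g → ℂ)) W) x + (4*lam4gm2) * Dv ((Pi.single (⟨g-1, hg1⟩ : Fin g) (1:ℂ) : Fin g → ℂ)) (Dv ((Pi.single (⟨g-1, hg1⟩ : Fin g) (1:ℂ) : Fin g → ℂ)) W) x
        + (-(2*lam4g*lam4gm4 - 8*lam4gp2*lam4gm6)) := by
    funext x
    have h := hrel x
    simp only [hPgg2, hPg32, hPg52, hP332, hP42] at h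
    linear_combination -h
  -- the substituted function
  have hΦ : (fun t : Fin 3 → ℂ => -2 * Pgg (fun k =>
      if (k:ℕ) = g-1 then t 0 + (lam4g / μ) * t 1
      else if (k:ℕ) = g-2 then (2*μ) * t 1
      else if (k:ℕ) = g-3 then (-16 * lam4gp2) * t 2
      else b ((k:ℕ)+1))
      - ((2/3) * lam4gm2 + lam4g^2 / (18 * lam4gp2)))
      = fun t => (fun u => 2 * Dv ((Pi.single (⟨g-1, hg1⟩ : Fin g) (1:ℂ) : Fin g → ℂ)) (Dv ((Pi.single (⟨g-1, hg1⟩ : Fin g) (1:ℂ) : Fin g → ℂ)) W) u - ((2/3) * lam4gm2 + lam4g^2 / (18 * lam4gp2))) ((fun k : Fin g => if (k:ℕ) = g-1 then 0 else if (k:ℕ) = g-2 then 0 else if (k:ℕ) = g-3 then (0:ℂ) else b ((k:ℕ)+1)) + t 0 • ((Pi.single (⟨g-1, hg1⟩ : Fin g) (1:ℂ) : Fin g → ℂ)) + t 1 • ((lam4g/μ) • ((Pi.single (⟨g-1, hg1⟩ : Fin g) (1:ℂ) : Fin g → ℂ)) + (2*μ) • ((Pi.single (⟨g-2, hg2⟩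 : Fin g) (1:ℂ) : Fin g → ℂ))) + t 2 • ((-16*lam4gp2) • ((Pi.single (⟨g-3, hg3⟩ : Fin g) (1:ℂ) : Fin g → ℂ)))) := by
    funext t
    have hA : (fun k : Fin g =>
        if (k:ℕ) = g-1 then t 0 + (lam4g / μ) * t 1
        else if (k:ℕ) = g-2 then (2*μ) * t 1
        else if (k:ℕ) = g-3 then (-16 * lam4gp2) * t 2
        else b ((k:ℕ)+1)) = (fun k : Fin g => if (k:ℕ) = g-1 then 0 else if (k:ℕ) = g-2 then 0 else if (k:ℕ) = g-3 then (0:ℂ) else b ((k:ℕ)+1)) + t 0 • ((Pi.single (⟨g-1, hg1⟩ : Fin g) (1:ℂ) : Fin g → ℂ)) + t 1 • ((lam4g/μ) • ((Pi.single (⟨g-1, hg1⟩ : Fin g) (1:ℂ) : Fin g → ℂ)) + (2*μ) • ((Pi.single (⟨g-2, hg2⟩ : Fin g) (1:ℂ) : Fin g → ℂ))) + t 2 • ((-16*lam4gp2) • ((Pi.single (⟨g-3, hg3⟩ : Fin g) (1:ℂ) : Fin g → ℂ))) := by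
      funext k
      simp only [Pi.add_apply, Pi.smul_apply, Pi.single_apply, smul_eq_mul, Fin.ext_iff]
      have hne12 : ¬(g - 1 = g - 2) := by omega
      have hne13 : ¬(g - 1 = g - 3) := by omega
      have hne21 : ¬(g - 2 = g - 1) := by omega
      have hne23 : ¬(g - 2 = g - 3) := by omega
      have hne31 : ¬(g - 3 = g - 1) := by omega
      have hne32 : ¬(g - 3 = g - 2) := by omega
      by_cases h1 : (k:ℕ) = g - 1
      · have n2 : ¬((k:ℕ) = g - 2) := by omega
        have n3 : ¬((k:ℕ) = g - 3) := by omega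
        simp [h1, n2, n3, hne12, hne13]
        ring
      · by_cases h2 : (k:ℕ) = g - 2
        · have n3 : ¬((k:ℕ) = g - 3) := by omega
          simp [h1, h2, n3, hne21, hne23]
          ring
        · by_cases h3 : (k:ℕ) = g - 3
          · simp [h1, h2, h3, hne31, hne32]
            ring
          · simp [h1, h2, h3]
    rw [hA, hPgg2]
    ring
  rw [hΦ]
  -- analyticity / differentiability of the substituted pieces
  have aFU : AnalyticOnNhd ℂ (fun u => 2 * Dv ((Pi.single (⟨g-1, hg1⟩ : Fin g) (1:ℂ) : Fin g → ℂ)) (Dv ((Pi.single (⟨g-1, hg1⟩ : Fin g) (1:ℂ) : Fin g → ℂ)) W) u - ((2/3) * lam4gm2 + lam4g^2 / (18 * lam4gp2))) Set.univ := by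
    apply AnalyticOnNhd.sub _ analyticOnNhd_const
    exact analyticOnNhd_const.mul aS
  have dFU : Differentiable ℂ (fun u => 2 * Dv ((Pi.single (⟨g-1, hg1⟩ : Fin g) (1:ℂ) : Fin g → ℂ)) (Dv ((Pi.single (⟨g-1, hg1⟩ : Fin g) (1:ℂ) : Fin g → ℂ)) W) u - ((2/3) * lam4gm2 + lam4g^2 / (18 * lam4gp2))) := diff_of_an aFU
  have aFU1 : AnalyticOnNhd ℂ (Dv ((Pi.single (⟨g-1, hg1⟩ : Fin g) (1:ℂ) : Fin g → ℂ)) (fun u => 2 * Dv ((Pi.single (⟨g-1, hg1⟩ : Fin g) (1:ℂ) : Fin g → ℂ)) (Dv ((Pi.single (⟨g-1, hg1⟩ : Fin g) (1:ℂ) : Fin g → ℂ)) W) u - ((2/3) * lam4gm2 + lam4g^2 / (18 * lam4gp2)))) Set.univ := analyticOnNhd_dv aFU _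
  have dFU1 : Differentiable ℂ (Dv ((Pi.single (⟨g-1, hg1⟩ : Fin g) (1:ℂ) : Fin g → ℂ)) (fun u => 2 * Dv ((Pi.single (⟨g-1, hg1⟩ : Fin g) (1:ℂ) : Fin g → ℂ)) (Dv ((Pi.single (⟨g-1, hg1⟩ : Fin g) (1:ℂ) : Fin g → ℂ)) W) u - ((2/3) * lam4gm2 + lam4g^2 / (18 * lam4gp2)))) := diff_of_an aFU1
  have aFU2 : AnalyticOnNhd ℂ (Dv ((Pi.single (⟨g-1, hg1⟩ : Fin g) (1:ℂ) : Fin g → ℂ)) (Dv ((Pi.single (⟨g-1, hg1⟩ : Fin g) (1:ℂ) : Fin g → ℂ)) (fun u => 2 * Dv ((Pi.single (⟨g-1, hg1⟩ : Fin g) (1:ℂ) : Fin g → ℂ)) (Dv ((Pi.single (⟨g-1, hg1⟩ : Fin g) (1:ℂ) : Fin g → ℂ)) W) u - ((2/3) * lam4gm2 + lam4g^2 / (18 * lam4gp2))))) Set.univ := analyticOnNhd_dv aFU1 _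
  have dFU2 : Differentiable ℂ (Dv ((Pi.single (⟨g-1, hg1⟩ : Fin g) (1:ℂ) : Fin g → ℂ)) (Dv ((Pi.single (⟨g-1, hg1⟩ : Fin g) (1:ℂ) : Fin g → ℂ)) (fun u => 2 * Dv ((Pi.single (⟨g-1, hg1⟩ : Fin g) (1:ℂ) : Fin g → ℂ)) (Dv ((Pi.single (⟨g-1, hg1⟩ : Fin g) (1:ℂ) : Fin g → ℂ)) W) u - ((2/3) * lam4gm2 + lam4g^2 / (18 * lam4gp2))))) := diff_of_an aFU2
  have dFU3 : Differentiable ℂ (Dv ((Pi.single (⟨g-1, hg1⟩ : Fin g) (1:ℂ) : Fin g → ℂ)) (Dv ((Pi.single (⟨g-1, hg1⟩ : Fin g) (1:ℂ) : Fin g → ℂ)) (Dv ((Pi.single (⟨g-1, hg1⟩ : Fin g) (1:ℂ) : Fin g → ℂ)) (fun u => 2 * Dv ((Pi.single (⟨g-1, hg1⟩ : Fin g) (1:ℂ) : Fin g → ℂ)) (Dv ((Pi.single (⟨g-1, hg1⟩ : Fin g) (1:ℂ) : Fin g → ℂ)) W) u - ((2/3) * lam4gm2 + lam4g^2 / (18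 * lam4gp2)))))) :=
    diff_of_an (analyticOnNhd_dv aFU2 _)
  have dFU5 : Differentiable ℂ (Dv ((Pi.single (⟨g-3, hg3⟩ : Fin g) (1:ℂ) : Fin g → ℂ)) (fun u => 2 * Dv ((Pi.single (⟨g-1, hg1⟩ : Fin g) (1:ℂ) : Fin g → ℂ)) (Dv ((Pi.single (⟨g-1, hg1⟩ : Fin g) (1:ℂ) : Fin g → ℂ)) W) u - ((2/3) * lam4gm2 + lam4g^2 / (18 * lam4gp2)))) := diff_of_an (analyticOnNhd_dv aFU _)
  have dV1FU : Differentiable ℂ (Dv ((lam4g/μ) • ((Pi.single (⟨g-1, hg1⟩ : Fin g) (1:ℂ) : Fin g → ℂ)) + (2*μ) • ((Pi.single (⟨g-2, hg2⟩ : Fin g) (1:ℂ) : Fin g → ℂ))) (fun u => 2 * Dv ((Pi.single (⟨g-1, hg1⟩ : Fin g) (1:ℂ) : Fin g → ℂ)) (Dv ((Pi.single (⟨g-1, hg1⟩ : Fin g) (1:ℂ) : Fin g → ℂ)) W) u - ((2/3) * lam4gm2 + lam4g^2 / (18 * lam4gp2)))) := diff_of_an (analyticOnNhd_dv aFU _)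
  have dBB : Differentiable ℂ (fun x => (-16*lam4gp2) * Dv ((Pi.single (⟨g-3, hg3⟩ : Fin g) (1:ℂ) : Fin g → ℂ)) (fun u => 2 * Dv ((Pi.single (⟨g-1, hg1⟩ : Fin g) (1:ℂ) : Fin g → ℂ)) (Dv ((Pi.single (⟨g-1, hg1⟩ : Fin g) (1:ℂ) : Fin g → ℂ)) W) u - ((2/3) * lam4gm2 + lam4g^2 / (18 * lam4gp2))) x + 6 * (fun u => 2 * Dv ((Pi.single (⟨g-1, hg1⟩ : Fin g) (1:ℂ) : Fin g → ℂ)) (Dv ((Pi.single (⟨g-1, hg1⟩ : Fin g) (1:ℂ) : Fin g → ℂ)) W) u - ((2/3) * lam4gm2 + lam4g^2 / (18 * lam4gp2))) x * Dv ((Pi.single (⟨g-1, hg1⟩ : Fin g) (1:ℂ) : Fin g → ℂ)) (fun u => 2 * Dv ((Pi.single (⟨g-1, hg1⟩ : Fin g) (1:ℂ) : Fin g → ℂ)) (Dv ((Pi.single (⟨g-1, hg1⟩ : Fin g) (1:ℂ) : Fin g → ℂ)) W) u - ((2/3) * lam4gm2 + lam4g^2 / (18 * lam4gp2))) x + Dv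 ((Pi.single (⟨g-1, hg1⟩ : Fin g) (1:ℂ) : Fin g → ℂ)) (Dv ((Pi.single (⟨g-1, hg1⟩ : Fin g) (1:ℂ) : Fin g → ℂ)) (Dv ((Pi.single (⟨g-1, hg1⟩ : Fin g) (1:ℂ) : Fin g → ℂ)) (fun u => 2 * Dv ((Pi.single (⟨g-1, hg1⟩ : Fin g) (1:ℂ) : Fin g → ℂ)) (Dv ((Pi.single (⟨g-1, hg1⟩ : Fin g) (1:ℂ) : Fin g → ℂ)) W) u - ((2/3) * lam4gm2 + lam4g^2 / (18 * lam4gp2))))) x) := by fun_prop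
  -- chain rule for the affine substitution
  have hpd0 : ∀ (G : (Fin g → ℂ) → ℂ), Differentiable ℂ G →
      pd 0 (fun t : Fin 3 → ℂ => G ((fun k : Fin g => if (k:ℕ) = g-1 then 0 else if (k:ℕ) = g-2 then 0 else if (k:ℕ) = g-3 then (0:ℂ) else b ((k:ℕ)+1)) + t 0 • ((Pi.single (⟨g-1, hg1⟩ : Fin g) (1:ℂ) : Fin g → ℂ)) + t 1 • ((lam4g/μ) • ((Pi.single (⟨g-1, hg1⟩ : Fin g) (1:ℂ) : Fin g → ℂ)) + (2*μ) • ((Pi.single (⟨g-2, hg2⟩ : Fin g) (1:ℂ) : Fin g → ℂ))) + t 2 • ((-16*lam4gp2) • ((Pi.single (⟨g-3, hg3⟩ : Fin g) (1:ℂ) : Fin g → ℂ))))) = fun t : Fin 3 → ℂ => Dv ((Pi.single (⟨g-1, hg1⟩ : Fin g) (1:ℂ) : Fin g → ℂ)) G ((fun k : Fin g => if (k:ℕ) = g-1 then 0 else if (k:ℕ) = g-2 then 0 else if (k:ℕ) = g-3 then (0:ℂ) else b ((k:ℕ)+1)) + t 0 • ((Pi.single (⟨g-1, hg1⟩ : Fin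 g) (1:ℂ) : Fin g → ℂ)) + t 1 • ((lam4g/μ) • ((Pi.single (⟨g-1, hg1⟩ : Fin g) (1:ℂ) : Fin g → ℂ)) + (2*μ) • ((Pi.single (⟨g-2, hg2⟩ : Fin g) (1:ℂ) : Fin g → ℂ))) + t 2 • ((-16*lam4gp2) • ((Pi.single (⟨g-3, hg3⟩ : Fin g) (1:ℂ) : Fin g → ℂ)))) := by
    intro G hG
    simpa only [Matrix.cons_val_zero] using pd_comp_affine hG (fun k : Fin g => if (k:ℕ) = g-1 then 0 else if (k:ℕ) = g-2 then 0 else if (k:ℕ) = g-3 then (0:ℂ) else b ((k:ℕ)+1)) ((Pi.single (⟨g-1, hg1⟩ : Fin g) (1:ℂ) : Fin g → ℂ)) ((lam4g/μ) • ((Pi.single (⟨g-1, hg1⟩ : Fin g) (1:ℂ) : Fin g → ℂ)) + (2*μ) • ((Pi.single (⟨g-2, hg2⟩ : Fin g) (1:ℂ) : Fin g → ℂ))) ((-16*lam4gp2) • ((Pi.single (⟨g-3, hg3⟩ : Fin g) (1:ℂ) : Fin g → ℂ))) 0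
  have hpd1 : ∀ (G : (Fin g → ℂ) → ℂ), Differentiable ℂ G →
      pd 1 (fun t : Fin 3 → ℂ => G ((fun k : Fin g => if (k:ℕ) = g-1 then 0 else if (k:ℕ) = g-2 then 0 else if (k:ℕ) = g-3 then (0:ℂ) else b ((k:ℕ)+1)) + t 0 • ((Pi.single (⟨g-1, hg1⟩ : Fin g) (1:ℂ) : Fin g → ℂ)) + t 1 • ((lam4g/μ) • ((Pi.single (⟨g-1, hg1⟩ : Fin g) (1:ℂ) : Fin g → ℂ)) + (2*μ) • ((Pi.single (⟨g-2, hg2⟩ : Fin g) (1:ℂ) : Fin g → ℂ))) + t 2 • ((-16*lam4gp2) • ((Pi.single (⟨g-3, hg3⟩ : Fin g) (1:ℂ) : Fin g → ℂ))))) = fun t : Fin 3 → ℂ => Dv ((lam4g/μ) • ((Pi.single (⟨g-1, hg1⟩ : Fin g) (1:ℂ) : Fin g → ℂ)) + (2*μ) • ((Pi.single (⟨g-2, hg2⟩ : Fin g) (1:ℂ) : Fin g → ℂ))) G ((fun k : Fin g => if (k:ℕ) = g-1 then 0 else if (k:ℕ) = g-2 then 0 else if (k:ℕ) = g-3 then (0:ℂ)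 else b ((k:ℕ)+1)) + t 0 • ((Pi.single (⟨g-1, hg1⟩ : Fin g) (1:ℂ) : Fin g → ℂ)) + t 1 • ((lam4g/μ) • ((Pi.single (⟨g-1, hg1⟩ : Fin g) (1:ℂ) : Fin g → ℂ)) + (2*μ) • ((Pi.single (⟨g-2, hg2⟩ : Fin g) (1:ℂ) : Fin g → ℂ))) + t 2 • ((-16*lam4gp2) • ((Pi.single (⟨g-3, hg3⟩ : Fin g) (1:ℂ) : Fin g → ℂ)))) := by
    intro G hG
    simpa only [Matrix.cons_val_one, Matrix.head_cons, Matrix.cons_val_zero] using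
      pd_comp_affine hG (fun k : Fin g => if (k:ℕ) = g-1 then 0 else if (k:ℕ) = g-2 then 0 else if (k:ℕ) = g-3 then (0:ℂ) else b ((k:ℕ)+1)) ((Pi.single (⟨g-1, hg1⟩ : Fin g) (1:ℂ) : Fin g → ℂ)) ((lam4g/μ) • ((Pi.single (⟨g-1, hg1⟩ : Fin g) (1:ℂ) : Fin g → ℂ)) + (2*μ) • ((Pi.single (⟨g-2, hg2⟩ : Fin g) (1:ℂ) : Fin g → ℂ))) ((-16*lam4gp2) • ((Pi.single (⟨g-3, hg3⟩ : Fin g) (1:ℂ) : Fin g → ℂ))) 1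
  have hpd2 : ∀ (G : (Fin g → ℂ) → ℂ), Differentiable ℂ G →
      pd 2 (fun t : Fin 3 → ℂ => G ((fun k : Fin g => if (k:ℕ) = g-1 then 0 else if (k:ℕ) = g-2 then 0 else if (k:ℕ) = g-3 then (0:ℂ) else b ((k:ℕ)+1)) + t 0 • ((Pi.single (⟨g-1, hg1⟩ : Fin g) (1:ℂ) : Fin g → ℂ)) + t 1 • ((lam4g/μ) • ((Pi.single (⟨g-1, hg1⟩ : Fin g) (1:ℂ) : Fin g → ℂ)) + (2*μ) • ((Pi.single (⟨g-2, hg2⟩ : Fin g) (1:ℂ) : Fin g → ℂ))) + t 2 • ((-16*lam4gp2) • ((Pi.single (⟨g-3, hg3⟩ : Fin g) (1:ℂ) : Fin g → ℂ))))) = fun t : Fin 3 → ℂ => Dv ((-16*lam4gp2) • ((Pi.single (⟨g-3, hg3⟩ : Fin g) (1:ℂ) : Fin g → ℂ))) G ((fun k : Fin g => if (k:ℕ) = g-1 then 0 else if (k:ℕ) = g-2 then 0 else if (k:ℕ) = g-3 then (0:ℂ) else b ((k:ℕ)+1)) + t 0 • ((Pi.single (⟨g-1, hg1⟩ : Fin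 g) (1:ℂ) : Fin g → ℂ)) + t 1 • ((lam4g/μ) • ((Pi.single (⟨g-1, hg1⟩ : Fin g) (1:ℂ) : Fin g → ℂ)) + (2*μ) • ((Pi.single (⟨g-2, hg2⟩ : Fin g) (1:ℂ) : Fin g → ℂ))) + t 2 • ((-16*lam4gp2) • ((Pi.single (⟨g-3, hg3⟩ : Fin g) (1:ℂ) : Fin g → ℂ)))) := by
    intro G hG
    simpa only [Matrix.cons_val_two, Matrix.tail_cons, Matrix.head_cons, Matrix.cons_val_one, Matrix.cons_val_zero] using
      pd_comp_affine hG (fun k : Fin g => if (k:ℕ) = g-1 then 0 else if (k:ℕ) = g-2 then 0 else if (k:ℕ) = g-3 then (0:ℂ) else b ((k:ℕ)+1)) ((Pi.single (⟨g-1, hg1⟩ : Fin g) (1:ℂ) : Fin g → ℂ)) ((lam4g/μ) • ((Pi.single (⟨g-1, hg1⟩ : Fin g) (1:ℂ) : Fin g → ℂ)) + (2*μ) • ((Pi.single (⟨g-2, hg2⟩ : Fin g) (1:ℂ) : Fin g → ℂ))) ((-16*lam4gp2) • ((Pi.single (⟨g-3, hg3⟩ : Fin g) (1:ℂ) : Fin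 g → ℂ))) 2
  have hV2 : Dv ((-16*lam4gp2) • ((Pi.single (⟨g-3, hg3⟩ : Fin g) (1:ℂ) : Fin g → ℂ))) (fun u => 2 * Dv ((Pi.single (⟨g-1, hg1⟩ : Fin g) (1:ℂ) : Fin g → ℂ)) (Dv ((Pi.single (⟨g-1, hg1⟩ : Fin g) (1:ℂ) : Fin g → ℂ)) W) u - ((2/3) * lam4gm2 + lam4g^2 / (18 * lam4gp2))) = fun x => (-16*lam4gp2) * Dv ((Pi.single (⟨g-3, hg3⟩ : Fin g) (1:ℂ) : Fin g → ℂ)) (fun u => 2 * Dv ((Pi.single (⟨g-1, hg1⟩ : Fin g) (1:ℂ) : Fin g → ℂ)) (Dv ((Pi.single (⟨g-1, hg1⟩ : Fin g) (1:ℂ) : Fin g → ℂ)) W) u - ((2/3) * lam4gm2 + lam4g^2 / (18 * lam4gp2))) x :=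
    funext fun x => dv_vec_smul (fun u => 2 * Dv ((Pi.single (⟨g-1, hg1⟩ : Fin g) (1:ℂ) : Fin g → ℂ)) (Dv ((Pi.single (⟨g-1, hg1⟩ : Fin g) (1:ℂ) : Fin g → ℂ)) W) u - ((2/3) * lam4gm2 + lam4g^2 / (18 * lam4gp2))) (-16*lam4gp2) ((Pi.single (⟨g-3, hg3⟩ : Fin g) (1:ℂ) : Fin g → ℂ)) x
  unfold IsKPI
  intro t
  have hbr : (fun s : Fin 3 → ℂ =>
      pd 2 (fun t : Fin 3 → ℂ => (fun u => 2 * Dv ((Pi.single (⟨g-1, hg1⟩ : Fin g) (1:ℂ) : Fin g → ℂ)) (Dv ((Pi.single (⟨g-1, hg1⟩ : Fin g) (1:ℂ) : Fin g → ℂ)) W) u - ((2/3) * lam4gm2 + lam4g^2 / (18 * lam4gp2))) ((fun k : Fin g => if (k:ℕ) = g-1 then 0 else if (k:ℕ) = g-2 then 0 else if (k:ℕ) = g-3 then (0:ℂ) else b ((k:ℕ)+1)) + t 0 • ((Pi.single (⟨g-1, hg1⟩ : Fin g) (1:ℂ) : Fin g → ℂ)) + t 1 • ((lam4g/μ) •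 ((Pi.single (⟨g-1, hg1⟩ : Fin g) (1:ℂ) : Fin g → ℂ)) + (2*μ) • ((Pi.single (⟨g-2, hg2⟩ : Fin g) (1:ℂ) : Fin g → ℂ))) + t 2 • ((-16*lam4gp2) • ((Pi.single (⟨g-3, hg3⟩ : Fin g) (1:ℂ) : Fin g → ℂ))))) s
      + 6 * (fun t : Fin 3 → ℂ => (fun u => 2 * Dv ((Pi.single (⟨g-1, hg1⟩ : Fin g) (1:ℂ) : Fin g → ℂ)) (Dv ((Pi.single (⟨g-1, hg1⟩ : Fin g) (1:ℂ) : Fin g → ℂ)) W) u - ((2/3) * lam4gm2 + lam4g^2 / (18 * lam4gp2))) ((fun k : Fin g => if (k:ℕ) = g-1 then 0 else if (k:ℕ) = g-2 then 0 else if (k:ℕ) = g-3 then (0:ℂ) else b ((k:ℕ)+1)) + t 0 • ((Pi.single (⟨g-1, hg1⟩ : Fin g) (1:ℂ) : Fin g → ℂ)) + t 1 • ((lam4g/μ) • ((Pi.single (⟨g-1, hg1⟩ : Fin g) (1:ℂ) : Fin g → ℂ)) + (2*μ) • ((Pi.single (⟨g-2, hg2⟩ : Fin g) (1:ℂ) :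 Fin g → ℂ))) + t 2 • ((-16*lam4gp2) • ((Pi.single (⟨g-3, hg3⟩ : Fin g) (1:ℂ) : Fin g → ℂ))))) s * pd 0 (fun t : Fin 3 → ℂ => (fun u => 2 * Dv ((Pi.single (⟨g-1, hg1⟩ : Fin g) (1:ℂ) : Fin g → ℂ)) (Dv ((Pi.single (⟨g-1, hg1⟩ : Fin g) (1:ℂ) : Fin g → ℂ)) W) u - ((2/3) * lam4gm2 + lam4g^2 / (18 * lam4gp2))) ((fun k : Fin g => if (k:ℕ) = g-1 then 0 else if (k:ℕ) = g-2 then 0 else if (k:ℕ) = g-3 then (0:ℂ) else b ((k:ℕ)+1)) + t 0 • ((Pi.single (⟨g-1, hg1⟩ : Fin g) (1:ℂ) : Fin g → ℂ)) + t 1 • ((lam4g/μ) • ((Pi.single (⟨g-1, hg1⟩ : Fin g) (1:ℂ) : Fin g → ℂ)) + (2*μ) • ((Pi.single (⟨g-2, hg2⟩ : Fin g) (1:ℂ) : Fin g → ℂ))) + t 2 • ((-16*lam4gp2) • ((Pi.single (⟨g-3, hg3⟩ : Fin g) (1:ℂ) : Fin g → ℂ))))) s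
      + pd 0 (pd 0 (pd 0 (fun t : Fin 3 → ℂ => (fun u => 2 * Dv ((Pi.single (⟨g-1, hg1⟩ : Fin g) (1:ℂ) : Fin g → ℂ)) (Dv ((Pi.single (⟨g-1, hg1⟩ : Fin g) (1:ℂ) : Fin g → ℂ)) W) u - ((2/3) * lam4gm2 + lam4g^2 / (18 * lam4gp2))) ((fun k : Fin g => if (k:ℕ) = g-1 then 0 else if (k:ℕ) = g-2 then 0 else if (k:ℕ) = g-3 then (0:ℂ) else b ((k:ℕ)+1)) + t 0 • ((Pi.single (⟨g-1, hg1⟩ : Fin g) (1:ℂ) : Fin g → ℂ)) + t 1 • ((lam4g/μ) • ((Pi.single (⟨g-1, hg1⟩ : Fin g) (1:ℂ) : Fin g → ℂ)) + (2*μ) • ((Pi.single (⟨g-2, hg2⟩ : Fin g) (1:ℂ) : Fin g → ℂ))) + t 2 • ((-16*lam4gp2) • ((Pi.single (⟨g-3, hg3⟩ : Fin g) (1:ℂ) : Fin g → ℂ))))))) s)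
      = fun s : Fin 3 → ℂ => (fun x => (-16*lam4gp2) * Dv ((Pi.single (⟨g-3, hg3⟩ : Fin g) (1:ℂ) : Fin g → ℂ)) (fun u => 2 * Dv ((Pi.single (⟨g-1, hg1⟩ : Fin g) (1:ℂ) : Fin g → ℂ)) (Dv ((Pi.single (⟨g-1, hg1⟩ : Fin g) (1:ℂ) : Fin g → ℂ)) W) u - ((2/3) * lam4gm2 + lam4g^2 / (18 * lam4gp2))) x + 6 * (fun u => 2 * Dv ((Pi.single (⟨g-1, hg1⟩ : Fin g) (1:ℂ) : Fin g → ℂ)) (Dv ((Pi.single (⟨g-1, hg1⟩ : Fin g) (1:ℂ) : Fin g → ℂ)) W) u - ((2/3) * lam4gm2 + lam4g^2 / (18 * lam4gp2))) x * Dv ((Pi.single (⟨g-1, hg1⟩ : Fin g) (1:ℂ) : Fin g → ℂ)) (fun u => 2 * Dv ((Pi.single (⟨g-1, hg1⟩ : Fin g) (1:ℂ) : Fin g → ℂ)) (Dv ((Pi.single (⟨g-1, hg1⟩ : Fin g) (1:ℂ) : Fin g → ℂ)) W) u - ((2/3) * lam4gm2 + lam4g^2 / (18 * lam4gp2))) x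 + Dv ((Pi.single (⟨g-1, hg1⟩ : Fin g) (1:ℂ) : Fin g → ℂ)) (Dv ((Pi.single (⟨g-1, hg1⟩ : Fin g) (1:ℂ) : Fin g → ℂ)) (Dv ((Pi.single (⟨g-1, hg1⟩ : Fin g) (1:ℂ) : Fin g → ℂ)) (fun u => 2 * Dv ((Pi.single (⟨g-1, hg1⟩ : Fin g) (1:ℂ) : Fin g → ℂ)) (Dv ((Pi.single (⟨g-1, hg1⟩ : Fin g) (1:ℂ) : Fin g → ℂ)) W) u - ((2/3) * lam4gm2 + lam4g^2 / (18 * lam4gp2))))) x) ((fun k : Fin g => if (k:ℕ) = g-1 then 0 else if (k:ℕ) = g-2 then 0 else if (k:ℕ) = g-3 then (0:ℂ) else b ((k:ℕ)+1)) + s 0 • ((Pi.single (⟨g-1, hg1⟩ : Fin g) (1:ℂ) : Fin g → ℂ)) + s 1 • ((lam4g/μ) • ((Pi.single (⟨g-1, hg1⟩ : Fin g) (1:ℂ) : Fin g → ℂ)) + (2*μ) • ((Pi.single (⟨g-2, hg2⟩ : Fin g) (1:ℂ) : Fin g → ℂ))) + s 2 • ((-16*lam4gp2) • ((Pi.single (⟨g-3,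 hg3⟩ : Fin g) (1:ℂ) : Fin g → ℂ)))) := by
    rw [hpd2 (fun u => 2 * Dv ((Pi.single (⟨g-1, hg1⟩ : Fin g) (1:ℂ) : Fin g → ℂ)) (Dv ((Pi.single (⟨g-1, hg1⟩ : Fin g) (1:ℂ) : Fin g → ℂ)) W) u - ((2/3) * lam4gm2 + lam4g^2 / (18 * lam4gp2))) dFU, hV2, hpd0 (fun u => 2 * Dv ((Pi.single (⟨g-1, hg1⟩ : Fin g) (1:ℂ) : Fin g → ℂ)) (Dv ((Pi.single (⟨g-1, hg1⟩ : Fin g) (1:ℂ) : Fin g → ℂ)) W) u - ((2/3) * lam4gm2 + lam4g^2 / (18 * lam4gp2))) dFU, hpd0 (Dv ((Pi.single (⟨g-1, hg1⟩ : Fin g) (1:ℂ) : Fin g → ℂ)) (fun u => 2 * Dv ((Pi.single (⟨g-1, hg1⟩ : Fin g) (1:ℂ) : Fin g → ℂ)) (Dv ((Pi.single (⟨g-1, hg1⟩ : Fin g) (1:ℂ) : Fin g → ℂ)) W) u - ((2/3) * lam4gm2 + lam4g^2 / (18 * lam4gp2)))) dFU1,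
      hpd0 (Dv ((Pi.single (⟨g-1, hg1⟩ : Fin g) (1:ℂ) : Fin g → ℂ)) (Dv ((Pi.single (⟨g-1, hg1⟩ : Fin g) (1:ℂ) : Fin g → ℂ)) (fun u => 2 * Dv ((Pi.single (⟨g-1, hg1⟩ : Fin g) (1:ℂ) : Fin g → ℂ)) (Dv ((Pi.single (⟨g-1, hg1⟩ : Fin g) (1:ℂ) : Fin g → ℂ)) W) u - ((2/3) * lam4gm2 + lam4g^2 / (18 * lam4gp2))))) dFU2]
  rw [hbr, hpd0 (fun x => (-16*lam4gp2) * Dv ((Pi.single (⟨g-3, hg3⟩ : Fin g) (1:ℂ) : Fin g → ℂ)) (fun u => 2 * Dv ((Pi.single (⟨g-1, hg1⟩ : Fin g) (1:ℂ) : Fin g → ℂ)) (Dv ((Pi.single (⟨g-1, hg1⟩ : Fin g) (1:ℂ) : Fin g → ℂ)) W) u - ((2/3) * lam4gm2 + lam4g^2 / (18 * lam4gp2))) x + 6 * (fun u => 2 * Dv ((Pi.single (⟨g-1, hg1⟩ : Fin g) (1:ℂ) : Fin g → ℂ)) (Dv ((Pi.single (⟨g-1, hg1⟩ : Fin g) (1:ℂ)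 : Fin g → ℂ)) W) u - ((2/3) * lam4gm2 + lam4g^2 / (18 * lam4gp2))) x * Dv ((Pi.single (⟨g-1, hg1⟩ : Fin g) (1:ℂ) : Fin g → ℂ)) (fun u => 2 * Dv ((Pi.single (⟨g-1, hg1⟩ : Fin g) (1:ℂ) : Fin g → ℂ)) (Dv ((Pi.single (⟨g-1, hg1⟩ : Fin g) (1:ℂ) : Fin g → ℂ)) W) u - ((2/3) * lam4gm2 + lam4g^2 / (18 * lam4gp2))) x + Dv ((Pi.single (⟨g-1, hg1⟩ : Fin g) (1:ℂ) : Fin g → ℂ)) (Dv ((Pi.single (⟨g-1, hg1⟩ : Fin g) (1:ℂ) : Fin g → ℂ)) (Dv ((Pi.single (⟨g-1, hg1⟩ : Fin g) (1:ℂ) : Fin g → ℂ)) (fun u => 2 * Dv ((Pi.single (⟨g-1, hg1⟩ : Fin g) (1:ℂ) : Fin g → ℂ)) (Dv ((Pi.single (⟨g-1, hg1⟩ : Fin g) (1:ℂ) : Fin g → ℂ)) W) u - ((2/3) * lam4gm2 + lam4g^2 / (18 * lam4gp2))))) x) dBB, hpd1 (fun u => 2 * Dv ((Pi.single (⟨g-1,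 hg1⟩ : Fin g) (1:ℂ) : Fin g → ℂ)) (Dv ((Pi.single (⟨g-1, hg1⟩ : Fin g) (1:ℂ) : Fin g → ℂ)) W) u - ((2/3) * lam4gm2 + lam4g^2 / (18 * lam4gp2))) dFU, hpd1 (Dv ((lam4g/μ) • ((Pi.single (⟨g-1, hg1⟩ : Fin g) (1:ℂ) : Fin g → ℂ)) + (2*μ) • ((Pi.single (⟨g-2, hg2⟩ : Fin g) (1:ℂ) : Fin g → ℂ))) (fun u => 2 * Dv ((Pi.single (⟨g-1, hg1⟩ : Fin g) (1:ℂ) : Fin g → ℂ)) (Dv ((Pi.single (⟨g-1, hg1⟩ : Fin g) (1:ℂ) : Fin g → ℂ)) W) u - ((2/3) * lam4gm2 + lam4g^2 / (18 * lam4gp2)))) dV1FU]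
  exact key_ulevel W hW ((Pi.single (⟨g-1, hg1⟩ : Fin g) (1:ℂ) : Fin g → ℂ)) ((Pi.single (⟨g-2, hg2⟩ : Fin g) (1:ℂ) : Fin g → ℂ)) ((Pi.single (⟨g-3, hg3⟩ : Fin g) (1:ℂ) : Fin g → ℂ)) lam4g lam4gp2 lam4gm2
    (2*lam4g*lam4gm4 - 8*lam4gp2*lam4gm6) μ hlam hμ (fun u => 2 * Dv ((Pi.single (⟨g-1, hg1⟩ : Fin g) (1:ℂ) : Fin g → ℂ)) (Dv ((Pi.single (⟨g-1, hg1⟩ : Fin g) (1:ℂ) : Fin g → ℂ)) W) u - ((2/3) * lam4gm2 + lam4g^2 / (18 * lam4gp2))) rfl hrel2 (((fun k : Fin g => if (k:ℕ) = g-1 then 0 else if (k:ℕ) = g-2 then 0 else if (k:ℕ) = g-3 then (0:ℂ) else b ((k:ℕ)+1)) + t 0 • ((Pi.single (⟨g-1, hg1⟩ : Fin g) (1:ℂ) : Fin g → ℂ)) + t 1 • ((lam4g/μ) • ((Pi.single (⟨g-1, hg1⟩ : Fin g) (1:ℂ) : Fin g → ℂ)) + (2*μ) • ((Pi.single (⟨g-2,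 hg2⟩ : Fin g) (1:ℂ) : Fin g → ℂ))) + t 2 • ((-16*lam4gp2) • ((Pi.single (⟨g-3, hg3⟩ : Fin g) (1:ℂ) : Fin g → ℂ)))))
end
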